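/- arXiv:quant-ph/0110025 — 6 statements merged into one kernel-verified Lean document; each statement's English description precedes it below -/
import Mathlib

section
/- Let H be a finite-dimensional complex Hilbert space, let P = (P_1,...,P_m) and Q = (Q_1,...,Q_n) be projective measurements (each P_i and Q_j an orthogonal projection with sum equal to the identity), and let ψ be a unit vector. Define p_i = ⟨ψ, P_i ψ⟩ and q_j = ⟨ψ, Q_j ψ⟩. Then H(P,ψ) + H(Q,ψ) ≥ -2 log₂ max_{i,j} |⟨ψ, P_i Q_j ψ⟩| / (‖P_i ψ‖ ‖Q_j ψ‖), where H(P,ψ) = -Σ_i p_i log₂ p_i, H(Q,ψ) = -Σ_j q_j log₂ q_j, and the maximum is over indices i,j with P_i ψ ≠ 0 and Q_j ψ ≠ 0. -/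
/-!
Maassen–Uffink via Riesz–Thorin. On the outcomes of positive probability the amplitudes
`x i = ‖P i ψ‖` and `y j = ‖Q j ψ‖` satisfy `y = T x`, where `T j i` is the overlap of the unit
vectors `Q j ψ / ‖Q j ψ‖` and `P i ψ / ‖P i ψ‖`. The entries of `T` are bounded by the maximal
overlap `c`, and `T` is an `ℓ²`-contraction by Bessel's inequality. Pairing `T x` with the
Hölder-dual vector of `y` and applying the Hadamard three-lines theorem interpolates between these
two bounds: `‖y‖_{2/t} ≤ c^(1-t) ‖x‖_{2/(2-t)}` for `0 < t ≤ 1`. Both sides equal `1` at `t = 1`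
since `‖x‖₂ = ‖y‖₂ = 1`, so comparing derivatives there gives
`∑ x i² log x i + ∑ y j² log y j ≤ log c`, which is the claim because `p i = x i²`.
-/

open Complex Finset Set Filter
open scoped InnerProductSpace

lemma norm_ofReal_cpow_le_max {r κ : ℝ} (hr : 0 < r) {e : ℂ} (he : 0 ≤ e.re) (heκ : e.re ≤ κ) :
    ‖(r : ℂ) ^ e‖ ≤ max 1 (r ^ κ) := by
  rw [norm_cpow_eq_rpow_re_of_pos hr]
  rcases le_total r 1 with h | h
  · exact le_max_of_le_left (Real.rpow_le_one hr.le h he)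
  · exact le_max_of_le_right (Real.rpow_le_rpow_of_exponent_le h heκ)

section Interpolation

variable {I J : Type*} [Fintype I] [Fintype J] (T : J → I → ℂ) (w : J → ℝ) (x : I → ℝ) (t : ℝ)

-- The exponent `(2 - z) / (2 - t)` is `1` at `z = t`; its real part is `2 / (2 - t)` on the line
-- `re z = 0`, where the entrywise bound on `T` is used, and `1 / (2 - t)` on `re z = 1`, where the
-- `ℓ²` bound is used.
noncomputable def interpolant (z : ℂ) : ℂ :=
  ∑ j, (w j : ℂ) ^ ((2 - z) / (2 - t : ℝ)) * ∑ i, T j i * (x i : ℂ) ^ ((2 - z) / (2 - t : ℝ))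

variable {T w x t}

lemma re_two_sub_div_ofReal (z : ℂ) :
    ((2 - z) / (2 - t : ℝ)).re = (2 - z.re) / (2 - t) := by
  rw [div_ofReal_re, sub_re, re_ofNat]

lemma differentiable_interpolant (hw : ∀ j, 0 < w j) (hx : ∀ i, 0 < x i) :
    Differentiable ℂ (interpolant T w x t) := by
  have he : Differentiable ℂ fun z : ℂ => (2 - z) / (2 - t : ℝ) := by fun_prop
  refine Differentiable.fun_sum fun j _ => Differentiable.mul ?_ ?_
  · exact he.const_cpow (.inl (ofReal_ne_zero.mpr (hw j).ne'))
  · exact Differentiable.fun_sum fun i _ =>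
      (he.const_cpow (.inl (ofReal_ne_zero.mpr (hx i).ne'))).const_mul _

lemma norm_interpolant_le (hw : ∀ j, 0 < w j) (z : ℂ) :
    ‖interpolant T w x t z‖ ≤
      ∑ j, w j ^ ((2 - z.re) / (2 - t)) * ‖∑ i, T j i * (x i : ℂ) ^ ((2 - z) / (2 - t : ℝ))‖ := by
  refine (norm_sum_le _ _).trans (sum_le_sum fun j _ => ?_)
  rw [norm_mul, norm_cpow_eq_rpow_re_of_pos (hw j), re_two_sub_div_ofReal]

lemma bddAbove_norm_interpolant (hw : ∀ j, 0 < w j) (hx : ∀ i, 0 < x i) (ht : t < 2) :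
    BddAbove ((norm ∘ interpolant T w x t) '' HadamardThreeLines.verticalClosedStrip 0 1) := by
  refine ⟨∑ j, ∑ i, max 1 (w j ^ (2 / (2 - t))) * (‖T j i‖ * max 1 (x i ^ (2 / (2 - t)))), ?_⟩
  rintro _ ⟨z, ⟨hz0, hz1⟩, rfl⟩
  have h2t : 0 < 2 - t := by linarith
  have hre := re_two_sub_div_ofReal (t := t) z
  have he0 : 0 ≤ ((2 - z) / (2 - t : ℝ)).re := by rw [hre]; exact div_nonneg (by linarith) h2t.le
  have heκ : ((2 - z) / (2 - t : ℝ)).re ≤ 2 / (2 - t) := by rw [hre]; gcongr; linarith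
  refine (norm_sum_le _ _).trans (sum_le_sum fun j _ => ?_)
  rw [norm_mul, ← mul_sum]
  gcongr
  · exact norm_ofReal_cpow_le_max (hw j) he0 heκ
  refine (norm_sum_le _ _).trans (sum_le_sum fun i _ => ?_)
  rw [norm_mul]
  gcongr
  exact norm_ofReal_cpow_le_max (hx i) he0 heκ

lemma norm_interpolant_le_of_re_eq_zero {c : ℝ} (hw : ∀ j, 0 < w j) (hx : ∀ i, 0 < x i)
    (hTc : ∀ j i, ‖T j i‖ ≤ c) (hwq : ∑ j, w j ^ (2 / (2 - t)) = 1) {z : ℂ} (hz : z.re = 0) :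
    ‖interpolant T w x t z‖ ≤ c * ∑ i, x i ^ (2 / (2 - t)) := by
  refine (norm_interpolant_le hw z).trans ?_
  rw [hz, sub_zero]
  calc ∑ j, w j ^ (2 / (2 - t)) * ‖∑ i, T j i * (x i : ℂ) ^ ((2 - z) / (2 - t : ℝ))‖
      ≤ ∑ j, w j ^ (2 / (2 - t)) * (c * ∑ i, x i ^ (2 / (2 - t))) := by
        refine sum_le_sum fun j _ => mul_le_mul_of_nonneg_left ?_ (Real.rpow_nonneg (hw j).le _)
        rw [mul_sum]
        refine (norm_sum_le _ _).trans (sum_le_sum fun i _ => ?_)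
        rw [norm_mul, norm_cpow_eq_rpow_re_of_pos (hx i), re_two_sub_div_ofReal, hz, sub_zero]
        exact mul_le_mul_of_nonneg_right (hTc j i) (Real.rpow_nonneg (hx i).le _)
    _ = c * ∑ i, x i ^ (2 / (2 - t)) := by rw [← sum_mul, hwq, one_mul]

lemma norm_interpolant_le_of_re_eq_one (hw : ∀ j, 0 < w j) (hx : ∀ i, 0 < x i)
    (hT2 : ∀ ξ : I → ℂ, ∑ j, ‖∑ i, T j i * ξ i‖ ^ 2 ≤ ∑ i, ‖ξ i‖ ^ 2)
    (hwq : ∑ j, w j ^ (2 / (2 - t)) = 1) {z : ℂ} (hz : z.re = 1) :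
    ‖interpolant T w x t z‖ ≤ √(∑ i, x i ^ (2 / (2 - t))) := by
  have hsq : ∀ r : ℝ, 0 < r → (r ^ ((2 - 1) / (2 - t))) ^ 2 = r ^ (2 / (2 - t)) := fun r hr => by
    rw [← Real.rpow_mul_natCast hr.le]; ring_nf
  set ξ : I → ℂ := fun i => (x i : ℂ) ^ ((2 - z) / (2 - t : ℝ))
  refine (norm_interpolant_le hw z).trans ?_
  rw [hz]
  calc ∑ j, w j ^ ((2 - 1) / (2 - t)) * ‖∑ i, T j i * ξ i‖
      ≤ √(∑ j, (w j ^ ((2 - 1) / (2 - t))) ^ 2) * √(∑ j, ‖∑ i, T j i * ξ i‖ ^ 2) :=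
        Real.sum_mul_le_sqrt_mul_sqrt _ _ _
    _ ≤ √(∑ i, ‖ξ i‖ ^ 2) := by
        rw [sum_congr rfl fun j _ => hsq _ (hw j), hwq, Real.sqrt_one, one_mul]
        exact Real.sqrt_le_sqrt (hT2 ξ)
    _ = √(∑ i, x i ^ (2 / (2 - t))) := by
        congr 1
        refine sum_congr rfl fun i _ => ?_
        rw [norm_cpow_eq_rpow_re_of_pos (hx i), re_two_sub_div_ofReal, hz, hsq _ (hx i)]

lemma interpolant_ofReal (ht : t ≠ 2) :
    interpolant T w x t t = ∑ j, (w j : ℂ) * ∑ i, T j i * x i := by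
  have he : (2 - (t : ℂ)) / (2 - t : ℝ) = 1 := by
    rw [ofReal_sub, ofReal_ofNat]
    exact div_self (sub_ne_zero.mpr (by exact_mod_cast ht.symm))
  simp only [interpolant, he, cpow_one]

lemma norm_sum_mul_sum_mul_le_interp {c : ℝ} (hc : 0 ≤ c) (hw : ∀ j, 0 < w j)
    (hx : ∀ i, 0 < x i) (hTc : ∀ j i, ‖T j i‖ ≤ c)
    (hT2 : ∀ ξ : I → ℂ, ∑ j, ‖∑ i, T j i * ξ i‖ ^ 2 ≤ ∑ i, ‖ξ i‖ ^ 2)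
    (hwq : ∑ j, w j ^ (2 / (2 - t)) = 1) (ht0 : 0 ≤ t) (ht1 : t ≤ 1) :
    ‖∑ j, (w j : ℂ) * ∑ i, T j i * x i‖ ≤
      c ^ (1 - t) * (∑ i, x i ^ (2 / (2 - t))) ^ ((2 - t) / 2) := by
  set A := ∑ i, x i ^ (2 / (2 - t))
  have hA : 0 ≤ A := sum_nonneg fun i _ => Real.rpow_nonneg (hx i).le _
  have h := HadamardThreeLines.norm_le_interp_of_mem_verticalClosedStrip₀₁'
    (interpolant T w x t) (z := t) (by simpa using ⟨ht0, ht1⟩)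
    (differentiable_interpolant hw hx).diffContOnCl (bddAbove_norm_interpolant hw hx (by linarith))
    (fun z hz => norm_interpolant_le_of_re_eq_zero hw hx hTc hwq hz)
    (fun z hz => norm_interpolant_le_of_re_eq_one hw hx hT2 hwq hz)
  rw [interpolant_ofReal (by linarith), ofReal_re] at h
  refine h.trans_eq ?_
  rw [Real.mul_rpow hc hA, Real.sqrt_eq_rpow, ← Real.rpow_mul hA, mul_assoc, ← Real.rpow_add' hA]
  · ring_nf
  · linarith

end Interpolation

lemma exists_sum_rpow_eq_one_sum_mul_eq {J : Type*} [Fintype J] [Nonempty J] {p q : ℝ}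
    (hpq : p.HolderConjugate q) {y : J → ℝ} (hy : ∀ j, 0 < y j) :
    ∃ w : J → ℝ, (∀ j, 0 < w j) ∧ ∑ j, w j ^ q = 1 ∧ ∑ j, w j * y j = (∑ j, y j ^ p) ^ p⁻¹ := by
  set S := ∑ j, y j ^ p
  have hS : 0 < S := sum_pos (fun j _ => Real.rpow_pos_of_pos (hy j) _) univ_nonempty
  refine ⟨fun j => y j ^ (p - 1) / S ^ q⁻¹,
    fun j => div_pos (Real.rpow_pos_of_pos (hy j) _) (Real.rpow_pos_of_pos hS _), ?_, ?_⟩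
  · calc ∑ j, (y j ^ (p - 1) / S ^ q⁻¹) ^ q = ∑ j, y j ^ p / S := by
          refine sum_congr rfl fun j _ => ?_
          rw [Real.div_rpow (Real.rpow_nonneg (hy j).le _) (Real.rpow_nonneg hS.le _),
            ← Real.rpow_mul (hy j).le, ← Real.rpow_mul hS.le, hpq.sub_one_mul_conj,
            inv_mul_cancel₀ hpq.symm.ne_zero, Real.rpow_one]
      _ = 1 := by rw [← sum_div, div_self hS.ne']
  · calc ∑ j, y j ^ (p - 1) / S ^ q⁻¹ * y j = ∑ j, y j ^ p / S ^ q⁻¹ := by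
          refine sum_congr rfl fun j _ => ?_
          rw [div_mul_eq_mul_div, ← Real.rpow_add_one (hy j).ne', sub_add_cancel]
      _ = S ^ p⁻¹ := by
          rw [← sum_div, ← hpq.one_sub_inv, Real.rpow_sub hS, Real.rpow_one]
          exact div_div_cancel₀ hS.ne'

lemma rpow_sum_rpow_le_interp {I J : Type*} [Fintype I] [Fintype J] {T : J → I → ℂ}
    {x : I → ℝ} {y : J → ℝ} {c t : ℝ} (hc : 0 ≤ c) (hx : ∀ i, 0 < x i) (hy : ∀ j, 0 < y j)
    (hTc : ∀ j i, ‖T j i‖ ≤ c)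
    (hT2 : ∀ ξ : I → ℂ, ∑ j, ‖∑ i, T j i * ξ i‖ ^ 2 ≤ ∑ i, ‖ξ i‖ ^ 2)
    (hyx : ∀ j, (y j : ℂ) = ∑ i, T j i * x i) (ht0 : 0 < t) (ht1 : t ≤ 1) :
    (∑ j, y j ^ (2 / t)) ^ (t / 2) ≤
      c ^ (1 - t) * (∑ i, x i ^ (2 / (2 - t))) ^ ((2 - t) / 2) := by
  rcases isEmpty_or_nonempty J with hJ | hJ
  · rw [univ_eq_empty, sum_empty, Real.zero_rpow (by positivity)]
    exact mul_nonneg (Real.rpow_nonneg hc _)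
      (Real.rpow_nonneg (sum_nonneg fun i _ => Real.rpow_nonneg (hx i).le _) _)
  have hpq : (2 / t).HolderConjugate (2 / (2 - t)) := by
    simpa only [inv_div] using Real.HolderConjugate.inv_inv (a := t / 2) (b := (2 - t) / 2)
      (by positivity) (by linarith) (by ring)
  obtain ⟨w, hw, hwq, hwy⟩ := exists_sum_rpow_eq_one_sum_mul_eq hpq hy
  calc (∑ j, y j ^ (2 / t)) ^ (t / 2) = ∑ j, w j * y j := by rw [hwy, inv_div]
    _ = ‖∑ j, (w j : ℂ) * y j‖ := by
        norm_cast
        exact (Real.norm_of_nonneg (sum_nonneg fun j _ => (mul_pos (hw j) (hy j)).le)).symm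
    _ = ‖∑ j, (w j : ℂ) * ∑ i, T j i * x i‖ := by simp_rw [hyx]
    _ ≤ _ := norm_sum_mul_sum_mul_le_interp hc hw hx hTc hT2 hwq ht0.le ht1

lemma HasDerivAt.nonpos_of_forall_mem_Ioo_le {f : ℝ → ℝ} {f' a b : ℝ} (hf : HasDerivAt f f' a)
    (hb : b < a) (h : ∀ t ∈ Ioo b a, f a ≤ f t) : f' ≤ 0 := by
  have hslope := (hasDerivWithinAt_iff_tendsto_slope.mp (hf.hasDerivWithinAt (s := Iio a)))
  rw [Set.sdiff_singleton_eq_self Set.self_notMem_Iio] at hslope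
  refine le_of_tendsto hslope (eventually_of_mem (Ioo_mem_nhdsLT hb) fun t ht => ?_)
  rw [slope_def_field]
  exact div_nonpos_of_nonneg_of_nonpos (sub_nonneg.mpr (h t ht)) (sub_nonpos.mpr ht.2.le)

lemma hasDerivAt_log_sum_rpow {ι : Type*} [Fintype ι] {x : ι → ℝ} (hx : ∀ i, 0 < x i)
    (hx2 : ∑ i, x i ^ 2 = 1) {u : ℝ → ℝ} {d a : ℝ} (hu : HasDerivAt u d a) (hua : u a = 2) :
    HasDerivAt (fun t => Real.log (∑ i, x i ^ u t)) (d * ∑ i, x i ^ 2 * Real.log (x i)) a := by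
  have hS : ∑ i, x i ^ u a = 1 := by simp_rw [hua, Real.rpow_two, hx2]
  have := (HasDerivAt.fun_sum fun i _ => hu.const_rpow (hx i)).log (by rw [hS]; exact one_ne_zero)
  refine this.congr_deriv ?_
  rw [hS, div_one, mul_sum]
  refine sum_congr rfl fun i _ => ?_
  rw [hua, Real.rpow_two]
  ring

lemma sum_sq_mul_log_add_sum_sq_mul_log_le_log_of_interp {I J : Type*} [Fintype I] [Fintype J]
    {x : I → ℝ} {y : J → ℝ} {c : ℝ} (hc : 0 < c) (hx : ∀ i, 0 < x i) (hy : ∀ j, 0 < y j)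
    (hx2 : ∑ i, x i ^ 2 = 1) (hy2 : ∑ j, y j ^ 2 = 1)
    (hinterp : ∀ t ∈ Ioo (0 : ℝ) 1, (∑ j, y j ^ (2 / t)) ^ (t / 2) ≤
      c ^ (1 - t) * (∑ i, x i ^ (2 / (2 - t))) ^ ((2 - t) / 2)) :
    ∑ i, x i ^ 2 * Real.log (x i) + ∑ j, y j ^ 2 * Real.log (y j) ≤ Real.log c := by
  -- `f ≥ 0 = f 1` on `(0, 1)`, so `f' 1 ≤ 0`; and `f' 1` is the left side minus `log c`.
  set Lx : ℝ → ℝ := fun t => Real.log (∑ i, x i ^ (2 / (2 - t)))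
  set Ly : ℝ → ℝ := fun t => Real.log (∑ j, y j ^ (2 / t))
  set f : ℝ → ℝ := fun t => (1 - t) * Real.log c + (2 - t) / 2 * Lx t - t / 2 * Ly t
  have hu : HasDerivAt (fun t : ℝ => 2 / (2 - t)) 2 1 :=
    ((hasDerivAt_const _ _).fun_div ((hasDerivAt_id' 1).const_sub 2) (by norm_num)).congr_deriv
      (by norm_num)
  have hv : HasDerivAt (fun t : ℝ => 2 / t) (-2) 1 :=
    ((hasDerivAt_const _ _).fun_div (hasDerivAt_id' 1) (by norm_num)).congr_deriv (by norm_num)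
  have hLx := hasDerivAt_log_sum_rpow hx hx2 hu (by norm_num)
  have hLy := hasDerivAt_log_sum_rpow hy hy2 hv (by norm_num)
  have hf : HasDerivAt f
      (-Real.log c + ∑ i, x i ^ 2 * Real.log (x i) + ∑ j, y j ^ 2 * Real.log (y j)) 1 := by
    have := ((((hasDerivAt_id' 1).const_sub 1).mul_const (Real.log c)).add
      ((((hasDerivAt_id' 1).const_sub 2).div_const 2).mul hLx)).sub
      (((hasDerivAt_id' 1).div_const 2).mul hLy)
    refine this.congr_deriv ?_
    norm_num [Real.rpow_two, hx2, hy2]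
    ring
  have hf_nonneg : ∀ t ∈ Ioo (0 : ℝ) 1, f 1 ≤ f t := by
    rintro t ⟨ht0, ht1⟩
    have hSx : 0 < ∑ i, x i ^ (2 / (2 - t)) := sum_pos (fun i _ => Real.rpow_pos_of_pos (hx i) _)
      (nonempty_of_sum_ne_zero (by rw [hx2]; exact one_ne_zero))
    have hSy : 0 < ∑ j, y j ^ (2 / t) := sum_pos (fun j _ => Real.rpow_pos_of_pos (hy j) _)
      (nonempty_of_sum_ne_zero (by rw [hy2]; exact one_ne_zero))
    have hlog := Real.log_le_log (Real.rpow_pos_of_pos hSy _) (hinterp t ⟨ht0, ht1⟩)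
    rw [Real.log_rpow hSy, Real.log_mul (Real.rpow_pos_of_pos hc _).ne'
      (Real.rpow_pos_of_pos hSx _).ne', Real.log_rpow hc, Real.log_rpow hSx] at hlog
    simp only [f, Lx, Ly]
    norm_num [Real.rpow_two, hx2, hy2]
    linarith
  linarith [hf.nonpos_of_forall_mem_Ioo_le one_pos hf_nonneg]

lemma sum_sq_mul_log_add_sum_sq_mul_log_le_log {I J : Type*} [Fintype I] [Fintype J]
    {T : J → I → ℂ} {x : I → ℝ} {y : J → ℝ} {c : ℝ} (hx : ∀ i, 0 < x i) (hy : ∀ j, 0 < y j)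
    (hTc : ∀ j i, ‖T j i‖ ≤ c)
    (hT2 : ∀ ξ : I → ℂ, ∑ j, ‖∑ i, T j i * ξ i‖ ^ 2 ≤ ∑ i, ‖ξ i‖ ^ 2)
    (hyx : ∀ j, (y j : ℂ) = ∑ i, T j i * x i) (hx2 : ∑ i, x i ^ 2 = 1) (hy2 : ∑ j, y j ^ 2 = 1) :
    ∑ i, x i ^ 2 * Real.log (x i) + ∑ j, y j ^ 2 * Real.log (y j) ≤ Real.log c := by
  have hc : 0 < c := by
    obtain ⟨j, -⟩ := nonempty_of_sum_ne_zero (by rw [hy2]; exact one_ne_zero)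
    have hyj : y j ≤ c * ∑ i, x i := calc
      y j = ‖∑ i, T j i * x i‖ := by rw [← hyx, norm_real, Real.norm_of_nonneg (hy j).le]
      _ ≤ ∑ i, c * x i := (norm_sum_le _ _).trans (sum_le_sum fun i _ => by
          rw [norm_mul, norm_real, Real.norm_of_nonneg (hx i).le]
          exact mul_le_mul_of_nonneg_right (hTc j i) (hx i).le)
      _ = c * ∑ i, x i := (mul_sum _ _ _).symm
    exact pos_of_mul_pos_left ((hy j).trans_le hyj) (sum_nonneg fun i _ => (hx i).le)
  exact sum_sq_mul_log_add_sum_sq_mul_log_le_log_of_interp hc hx hy hx2 hy2 fun t ht =>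
    rpow_sum_rpow_le_interp hc.le hx hy hTc hT2 hyx ht.1 ht.2.le

lemma Fintype.sum_subtype_eq_sum_of_eq_zero {ι M : Type*} [Fintype ι] [AddCommMonoid M]
    (p : ι → Prop) [DecidablePred p] {f : ι → M} (hf : ∀ i, ¬p i → f i = 0) :
    ∑ i : {i // p i}, f i = ∑ i, f i := by
  conv_rhs => rw [← Fintype.sum_subtype_add_sum_subtype p f]
  rw [Fintype.sum_eq_zero (fun i : {i // ¬p i} => f i) fun i => hf i.1 i.2, add_zero]

section InnerProductSpace

variable {𝕜 E ι : Type*} [RCLike 𝕜] [NormedAddCommGroup E] [InnerProductSpace 𝕜 E]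

lemma orthonormal_inv_norm_smul {v : ι → E} (hv0 : ∀ i, v i ≠ 0)
    (hv : Pairwise fun i j => ⟪v i, v j⟫_𝕜 = 0) :
    Orthonormal 𝕜 fun i => (‖v i‖⁻¹ : 𝕜) • v i :=
  ⟨fun i => norm_smul_inv_norm (hv0 i), fun i j hij => by
    simp only [inner_smul_left, inner_smul_right, hv hij, mul_zero]⟩

lemma norm_inner_inv_norm_smul (x y : E) :
    ‖⟪(‖x‖⁻¹ : 𝕜) • x, (‖y‖⁻¹ : 𝕜) • y⟫_𝕜‖ = ‖⟪x, y⟫_𝕜‖ / (‖x‖ * ‖y‖) := by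
  simp only [inner_smul_left, inner_smul_right, norm_mul, RCLike.norm_conj, norm_inv,
    RCLike.norm_ofReal, abs_norm]
  field_simp

lemma Orthonormal.sum_norm_sq_sum_inner_mul_le {I J : Type*} [Fintype I] [Fintype J]
    {u : I → E} {v : J → E} (hu : Orthonormal 𝕜 u) (hv : Orthonormal 𝕜 v) (ξ : I → 𝕜) :
    ∑ j, ‖∑ i, ⟪v j, u i⟫_𝕜 * ξ i‖ ^ 2 ≤ ∑ i, ‖ξ i‖ ^ 2 := by
  have hnorm : ‖∑ i, ξ i • u i‖ ^ 2 = ∑ i, ‖ξ i‖ ^ 2 := by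
    rw [← RCLike.ofReal_inj (K := 𝕜), RCLike.ofReal_pow, ← inner_self_eq_norm_sq_to_K,
      hu.inner_sum, RCLike.ofReal_sum]
    simp [RCLike.conj_mul]
  calc ∑ j, ‖∑ i, ⟪v j, u i⟫_𝕜 * ξ i‖ ^ 2 = ∑ j, ‖⟪v j, ∑ i, ξ i • u i⟫_𝕜‖ ^ 2 := by
        simp only [inner_sum, inner_smul_right, mul_comm]
    _ ≤ ‖∑ i, ξ i • u i‖ ^ 2 := Orthonormal.sum_inner_products_le _ hv
    _ = ∑ i, ‖ξ i‖ ^ 2 := hnorm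

variable [CompleteSpace E]

lemma IsStarProjection.apply_apply {p : E →L[𝕜] E} (hp : IsStarProjection p) (x : E) :
    p (p x) = p x :=
  congr($hp.isIdempotentElem x)

lemma IsStarProjection.inner_apply_left {p : E →L[𝕜] E} (hp : IsStarProjection p) (x y : E) :
    ⟪p x, y⟫_𝕜 = ⟪x, p y⟫_𝕜 :=
  hp.isSelfAdjoint.isSymmetric x y

lemma IsStarProjection.inner_apply_self {p : E →L[𝕜] E} (hp : IsStarProjection p) (x : E) :
    ⟪x, p x⟫_𝕜 = (‖p x‖ ^ 2 : ℝ) := by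
  rw [← hp.apply_apply, ← hp.inner_apply_left, hp.apply_apply, inner_self_eq_norm_sq_to_K,
    RCLike.ofReal_pow]

lemma IsStarProjection.inner_inv_norm_smul_apply_self {p : E →L[𝕜] E} (hp : IsStarProjection p)
    (x : E) : ⟪(‖p x‖⁻¹ : 𝕜) • p x, x⟫_𝕜 = ‖p x‖ := by
  rw [inner_smul_left, hp.inner_apply_left, hp.inner_apply_self, map_inv₀, RCLike.conj_ofReal,
    RCLike.ofReal_pow]
  rcases eq_or_ne ‖p x‖ 0 with h | h
  · simp [h]
  · field_simp

structure IsProjectiveMeasurement [Fintype ι] (P : ι → E →L[𝕜] E) : Prop where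
  isStarProjection : ∀ i, IsStarProjection (P i)
  sum_eq_one : ∑ i, P i = 1

namespace IsProjectiveMeasurement

variable [Fintype ι] {P : ι → E →L[𝕜] E}

lemma sum_apply (hP : IsProjectiveMeasurement P) (x : E) : ∑ i, P i x = x := by
  rw [← _root_.sum_apply, hP.sum_eq_one, one_apply_eq_self]

lemma sum_norm_sq_apply (hP : IsProjectiveMeasurement P) (x : E) :
    ∑ i, ‖P i x‖ ^ 2 = ‖x‖ ^ 2 := by
  rw [← RCLike.ofReal_inj (K := 𝕜), RCLike.ofReal_sum, RCLike.ofReal_pow,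
    ← inner_self_eq_norm_sq_to_K]
  calc ∑ i, ((‖P i x‖ ^ 2 : ℝ) : 𝕜) = ⟪x, ∑ i, P i x⟫_𝕜 := by
        simp only [inner_sum, (hP.isStarProjection _).inner_apply_self]
    _ = ⟪x, x⟫_𝕜 := by rw [hP.sum_apply]

lemma apply_apply_of_ne (hP : IsProjectiveMeasurement P) {i j : ι} (hij : i ≠ j) (x : E) :
    P i (P j x) = 0 := by
  classical
  have hsum := hP.sum_norm_sq_apply (P j x)
  rw [← add_sum_erase _ _ (mem_univ j), (hP.isStarProjection j).apply_apply, add_eq_left,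
    sum_eq_zero_iff_of_nonneg fun _ _ => sq_nonneg _] at hsum
  simpa using hsum i (mem_erase.mpr ⟨hij, mem_univ i⟩)

lemma inner_apply_apply_of_ne (hP : IsProjectiveMeasurement P) {i j : ι} (hij : i ≠ j)
    (x y : E) : ⟪P i x, P j y⟫_𝕜 = 0 := by
  rw [(hP.isStarProjection i).inner_apply_left, hP.apply_apply_of_ne hij, inner_zero_right]

lemma orthonormal_support (hP : IsProjectiveMeasurement P) (x : E) :
    Orthonormal 𝕜 fun i : {i // P i x ≠ 0} => (‖P i x‖⁻¹ : 𝕜) • P i x :=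
  orthonormal_inv_norm_smul (fun i => i.2) fun _ _ hij =>
    hP.inner_apply_apply_of_ne (Subtype.coe_ne_coe.mpr hij) x x

lemma sum_support_apply [DecidableEq E] (hP : IsProjectiveMeasurement P) (x : E) :
    ∑ i : {i // P i x ≠ 0}, P i x = x := by
  rw [Fintype.sum_subtype_eq_sum_of_eq_zero _ fun _ hi => not_not.mp hi, hP.sum_apply]

lemma sum_support_norm_sq_apply [DecidableEq E] (hP : IsProjectiveMeasurement P) (x : E) :
    ∑ i : {i // P i x ≠ 0}, ‖P i x‖ ^ 2 = ‖x‖ ^ 2 := by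
  rw [Fintype.sum_subtype_eq_sum_of_eq_zero (f := fun i => ‖P i x‖ ^ 2) _
    fun _ hi => by simp [not_not.mp hi], hP.sum_norm_sq_apply]

end IsProjectiveMeasurement

end InnerProductSpace

theorem IsProjectiveMeasurement.sum_norm_sq_mul_log_add_sum_norm_sq_mul_log_le_log
    {E I J : Type*} [NormedAddCommGroup E] [InnerProductSpace ℂ E] [CompleteSpace E]
    [Fintype I] [Fintype J] {P : I → E →L[ℂ] E} {Q : J → E →L[ℂ] E}
    (hP : IsProjectiveMeasurement P) (hQ : IsProjectiveMeasurement Q) {ψ : E} (hψ : ‖ψ‖ = 1)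
    {c : ℝ} (hc : ∀ i j, P i ψ ≠ 0 → Q j ψ ≠ 0 → ‖⟪P i ψ, Q j ψ⟫_ℂ‖ / (‖P i ψ‖ * ‖Q j ψ‖) ≤ c) :
    ∑ i, ‖P i ψ‖ ^ 2 * Real.log ‖P i ψ‖ + ∑ j, ‖Q j ψ‖ ^ 2 * Real.log ‖Q j ψ‖ ≤ Real.log c := by
  classical
  set u := fun i : {i // P i ψ ≠ 0} => (‖P i ψ‖⁻¹ : ℂ) • P i ψ
  set v := fun j : {j // Q j ψ ≠ 0} => (‖Q j ψ‖⁻¹ : ℂ) • Q j ψ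
  have hyx : ∀ j, (‖Q j.1 ψ‖ : ℂ) = ∑ i, ⟪v j, u i⟫_ℂ * ‖P i.1 ψ‖ := fun j => calc
    (‖Q j.1 ψ‖ : ℂ) = ⟪v j, ∑ i : {i // P i ψ ≠ 0}, P i ψ⟫_ℂ := by
      rw [hP.sum_support_apply]
      exact ((hQ.isStarProjection j).inner_inv_norm_smul_apply_self ψ).symm
    _ = ∑ i, ⟪v j, u i⟫_ℂ * ‖P i.1 ψ‖ := by
      refine (inner_sum _ _ _).trans (sum_congr rfl fun i _ => ?_)
      simp only [u]
      rw [mul_comm, ← inner_smul_right, smul_smul, mul_inv_cancel₀ (by simpa using i.2), one_smul]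
  rw [← Fintype.sum_subtype_eq_sum_of_eq_zero (fun i => P i ψ ≠ 0) fun i hi => by
      simp [not_not.mp hi],
    ← Fintype.sum_subtype_eq_sum_of_eq_zero (fun j => Q j ψ ≠ 0) fun j hj => by
      simp [not_not.mp hj]]
  refine sum_sq_mul_log_add_sum_sq_mul_log_le_log (fun i => norm_pos_iff.mpr i.2)
    (fun j => norm_pos_iff.mpr j.2) (fun j i => ?_)
    ((hP.orthonormal_support ψ).sum_norm_sq_sum_inner_mul_le (hQ.orthonormal_support ψ)) hyx
    (by rw [hP.sum_support_norm_sq_apply, hψ, one_pow])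
    (by rw [hQ.sum_support_norm_sq_apply, hψ, one_pow])
  rw [norm_inner_inv_norm_smul, norm_inner_symm, mul_comm]
  exact hc i j i.2 j.2

lemma sq_mul_logb_sq (b a : ℝ) :
    a ^ 2 * Real.logb b (a ^ 2) = 2 / Real.log b * (a ^ 2 * Real.log a) := by
  rw [Real.logb, Real.log_pow]
  ring

theorem entropic_uncertainty_projective
    {H : Type*} [NormedAddCommGroup H] [InnerProductSpace ℂ H] [FiniteDimensional ℂ H]
    {m n : ℕ} (P : Fin m → H →L[ℂ] H) (Q : Fin n → H →L[ℂ] H)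
    (hPsa : ∀ i, IsSelfAdjoint (P i)) (hPidem : ∀ i, P i ∘L P i = P i)
    (hQsa : ∀ j, IsSelfAdjoint (Q j)) (hQidem : ∀ j, Q j ∘L Q j = Q j)
    (hPsum : ∑ i, P i = 1) (hQsum : ∑ j, Q j = 1)
    (ψ : H) (hψ : ‖ψ‖ = 1) :
    (-∑ i, (inner ℂ ψ (P i ψ) : ℂ).re * Real.logb 2 (inner ℂ ψ (P i ψ) : ℂ).re) +
      (-∑ j, (inner ℂ ψ (Q j ψ) : ℂ).re * Real.logb 2 (inner ℂ ψ (Q j ψ) : ℂ).re) ≥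
    -2 * Real.logb 2 (sSup {r : ℝ | ∃ i j, P i ψ ≠ 0 ∧ Q j ψ ≠ 0 ∧
      r = ‖(inner ℂ ψ ((P i ∘L Q j) ψ) : ℂ)‖ / (‖P i ψ‖ * ‖Q j ψ‖)}) := by
  have hP : IsProjectiveMeasurement P := ⟨fun i => ⟨hPidem i, hPsa i⟩, hPsum⟩
  have hQ : IsProjectiveMeasurement Q := ⟨fun j => ⟨hQidem j, hQsa j⟩, hQsum⟩
  have hinner : ∀ i j, ⟪ψ, (P i ∘L Q j) ψ⟫_ℂ = ⟪P i ψ, Q j ψ⟫_ℂ := fun i j =>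
    ((hP.isStarProjection i).inner_apply_left ψ (Q j ψ)).symm
  set M := {r : ℝ | ∃ i j, P i ψ ≠ 0 ∧ Q j ψ ≠ 0 ∧
      r = ‖(inner ℂ ψ ((P i ∘L Q j) ψ) : ℂ)‖ / (‖P i ψ‖ * ‖Q j ψ‖)}
  have hM : BddAbove M := ⟨1, by
    rintro _ ⟨i, j, -, -, rfl⟩
    rw [hinner]
    exact div_le_one_of_le₀ (norm_inner_le_norm _ _) (by positivity)⟩
  have key := hP.sum_norm_sq_mul_log_add_sum_norm_sq_mul_log_le_log hQ hψ (c := sSup M)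
    fun i j hi hj => le_csSup hM ⟨i, j, hi, hj, by rw [hinner]⟩
  simp only [fun i => (hP.isStarProjection i).inner_apply_self ψ,
    fun j => (hQ.isStarProjection j).inner_apply_self ψ, RCLike.ofReal_eq_complex_ofReal, ofReal_re,
    sq_mul_logb_sq, ← mul_sum, ge_iff_le]
  calc -2 * Real.logb 2 (sSup M) = -(2 / Real.log 2 * Real.log (sSup M)) := by
        rw [Real.logb]; ring
    _ ≤ _ := by
        rw [← neg_add, ← mul_add]
        exact neg_le_neg (mul_le_mul_of_nonneg_left key (div_nonneg zero_le_two
          (Real.log_nonneg one_le_two)))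
end

section
/- For orthogonal projections P and Q on a finite-dimensional complex Hilbert space, ‖PQ‖ = 1 (operator norm) if and only if the ranges of P and Q have a nonzero intersection. -/
/-!
Write `P` and `Q` as the orthogonal projections onto `K = range P` and `L = range Q`. Both are
contractions, so `‖PQ‖ ≤ 1`, and a unit vector in `K ⊓ L` is fixed by `PQ`. Conversely, in finite
dimension the operator norm is attained at a unit vector `x`; then `‖PQx‖ ≤ ‖Qx‖ ≤ ‖x‖` are
equalities, and a projection preserves the norm of `x` only when it fixes `x`, so `x ∈ K ⊓ L`.
-/

namespace ContinuousLinearMap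

variable {𝕜 E F : Type*} [RCLike 𝕜] [NormedAddCommGroup E] [NormedSpace 𝕜 E]
  [SeminormedAddCommGroup F] [NormedSpace 𝕜 F]

theorem exists_mem_sphere_norm_apply_eq_opNorm [ProperSpace E] [Nontrivial E]
    (f : E →L[𝕜] F) : ∃ x ∈ Metric.sphere (0 : E) 1, ‖f x‖ = ‖f‖ := by
  have hcpt := (isCompact_sphere (0 : E) 1).image (continuous_norm.comp f.continuous)
  have hne : (Metric.sphere (0 : E) 1).Nonempty :=
    Set.nonempty_coe_sort.mp (NormedSpace.sphere_nonempty_rclike 𝕜 zero_le_one)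
  obtain ⟨x, hx, hfx⟩ := hcpt.sSup_mem (hne.image _)
  exact ⟨x, hx, hfx.trans f.sSup_sphere_eq_norm⟩

end ContinuousLinearMap

namespace Submodule

variable {𝕜 E : Type*} [RCLike 𝕜] [NormedAddCommGroup E] [InnerProductSpace 𝕜 E]
  {K L : Submodule 𝕜 E} [K.HasOrthogonalProjection] [L.HasOrthogonalProjection]

theorem mem_inf_of_norm_starProjection_comp_apply_eq {v : E}
    (h : ‖(K.starProjection ∘L L.starProjection) v‖ = ‖v‖) : v ∈ K ⊓ L := by
  have hK := K.norm_starProjection_apply_le (L.starProjection v)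
  have hL := L.norm_starProjection_apply_le v
  rw [ContinuousLinearMap.comp_apply] at h
  have hvL : v ∈ L := (L.mem_iff_norm_starProjection v).mpr (by linarith)
  rw [starProjection_eq_self_iff.mpr hvL] at h
  exact ⟨(K.mem_iff_norm_starProjection v).mpr h, hvL⟩

theorem norm_starProjection_comp_starProjection_le_one :
    ‖K.starProjection ∘L L.starProjection‖ ≤ 1 :=
  calc ‖K.starProjection ∘L L.starProjection‖
      ≤ ‖K.starProjection‖ * ‖L.starProjection‖ := ContinuousLinearMap.opNorm_comp_le _ _
    _ ≤ 1 * 1 := by gcongr <;> exact starProjection_norm_le _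
    _ = 1 := one_mul 1

theorem norm_starProjection_comp_starProjection_eq_one_iff [FiniteDimensional 𝕜 E] :
    ‖K.starProjection ∘L L.starProjection‖ = 1 ↔ K ⊓ L ≠ ⊥ := by
  have := FiniteDimensional.proper_rclike 𝕜 E
  constructor
  · intro h
    rcases subsingleton_or_nontrivial E with hE | hE
    · simp [Subsingleton.elim (K.starProjection ∘L L.starProjection) 0] at h
    obtain ⟨x, hx, hfx⟩ :=
      (K.starProjection ∘L L.starProjection).exists_mem_sphere_norm_apply_eq_opNorm
    rw [mem_sphere_zero_iff_norm] at hx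
    have hxKL : x ∈ K ⊓ L := mem_inf_of_norm_starProjection_comp_apply_eq (by rw [hfx, h, hx])
    exact (K ⊓ L).ne_bot_iff.mpr ⟨x, hxKL, norm_ne_zero_iff.mp (hx ▸ one_ne_zero)⟩
  · intro h
    obtain ⟨v, ⟨hvK, hvL⟩, hv⟩ := (K ⊓ L).ne_bot_iff.mp h
    refine le_antisymm norm_starProjection_comp_starProjection_le_one ?_
    have hfix : (K.starProjection ∘L L.starProjection) v = v := by
      simp [starProjection_eq_self_iff.mpr hvK, starProjection_eq_self_iff.mpr hvL]
    have := (K.starProjection ∘L L.starProjection).le_opNorm v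
    rw [hfix] at this
    exact one_le_of_le_mul_right₀ (norm_pos_iff.mpr hv) (by simpa using this)

end Submodule

theorem opNorm_projection_comp_eq_one_iff
    {H : Type*} [NormedAddCommGroup H] [InnerProductSpace ℂ H] [FiniteDimensional ℂ H]
    (P Q : H →L[ℂ] H)
    (hPsa : IsSelfAdjoint P) (hPidem : P ∘L P = P)
    (hQsa : IsSelfAdjoint Q) (hQidem : Q ∘L Q = Q) :
    ‖P ∘L Q‖ = 1 ↔
      ∃ v : H, v ≠ 0 ∧ v ∈ LinearMap.range (P : H →ₗ[ℂ] H) ∧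
        v ∈ LinearMap.range (Q : H →ₗ[ℂ] H) := by
  obtain ⟨_, hP⟩ := isStarProjection_iff_eq_starProjection_range.mp ⟨hPidem, hPsa⟩
  obtain ⟨_, hQ⟩ := isStarProjection_iff_eq_starProjection_range.mp ⟨hQidem, hQsa⟩
  conv_lhs => rw [hP, hQ]
  rw [Submodule.norm_starProjection_comp_starProjection_eq_one_iff, Submodule.ne_bot_iff]
  exact exists_congr fun v ↦ and_comm
end

section
/- Let (p_1,...,p_m) and (q_1,...,q_n) be probability distributions with all entries positive, and let R ∈ (0,1] be such that for all t ∈ (0,1): (Σ_i p_i^{1/(1-t)})^{(1-t)/t} · (Σ_j q_j^{1/(1+t)})^{-(1+t)/t} ≤ R². Then -Σ_i p_i log p_i - Σ_j q_j log q_j ≥ -2 log R. -/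
/-!
Taking logarithms, the hypothesis says `g t / t ≤ 2 log R` on `(0, 1)`, where
`g t = (1 - t) log ∑ pᵢ ^ (1/(1-t)) - (1 + t) log ∑ qⱼ ^ (1/(1+t))`. Since `∑ pᵢ = ∑ qⱼ = 1`,
`g 0 = 0`, so these are difference quotients of `g` at `0`; their limit `g' 0` is therefore at most
`2 log R`. As `d/ds log ∑ pᵢ ^ s = ∑ pᵢ log pᵢ` at `s = 1`, the chain rule gives
`g' 0 = ∑ pᵢ log pᵢ + ∑ qⱼ log qⱼ`, the negative of the sum of the two Shannon entropies.
-/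

open Real Filter Set Topology

section

variable {ι : Type*} [Fintype ι] {p : ι → ℝ}

lemma sum_rpow_pos (hp : ∀ i, 0 < p i) (hsum : ∑ i, p i = 1) (s : ℝ) : 0 < ∑ i, p i ^ s :=
  Finset.sum_pos (fun i _ => rpow_pos_of_pos (hp i) s)
    (Finset.nonempty_of_sum_ne_zero (f := p) (by rw [hsum]; exact one_ne_zero))

lemma HasDerivAt.mul_log_sum_rpow_one_div {c : ℝ → ℝ} {c' x : ℝ} (hc : HasDerivAt c c' x)
    (hcx : c x = 1) (hp : ∀ i, 0 < p i) (hsum : ∑ i, p i = 1) :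
    HasDerivAt (fun t => c t * Real.log (∑ i, p i ^ (1 / c t)))
      (-c' * ∑ i, p i * Real.log (p i)) x := by
  have hinv : HasDerivAt (fun t => 1 / c t) (-c') x := by
    simpa [one_div, hcx] using hc.fun_inv (by simp [hcx])
  have hpow : HasDerivAt (fun t => ∑ i, p i ^ (1 / c t)) (-c' * ∑ i, p i * Real.log (p i)) x := by
    refine (HasDerivAt.fun_sum (u := Finset.univ) fun i _ => hinv.const_rpow (hp i)).congr_deriv ?_
    simp only [hcx, div_one, rpow_one, Finset.mul_sum]
    exact Finset.sum_congr rfl fun i _ => by ring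
  refine (hc.fun_mul (hpow.log (by simp [hcx, hsum]))).congr_deriv ?_
  simp [hcx, hsum]

end

lemma HasDerivAt.le_of_slope_le {g : ℝ → ℝ} {g' x c : ℝ} (hg : HasDerivAt g g' x)
    (h : ∀ᶠ t in 𝓝[>] x, slope g x t ≤ c) : g' ≤ c :=
  le_of_tendsto ((hasDerivWithinAt_iff_tendsto_slope' self_notMem_Ioi).mp hg.hasDerivWithinAt) h

theorem entropy_bound_from_limit_general
    {m n : ℕ} (p : Fin m → ℝ) (q : Fin n → ℝ)
    (hp : ∀ i, 0 < p i) (hq : ∀ j, 0 < q j)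
    (hpsum : ∑ i, p i = 1) (hqsum : ∑ j, q j = 1)
    (R : ℝ)
    (h : ∀ t ∈ Set.Ioo (0 : ℝ) 1,
      (∑ i, p i ^ (1 / (1 - t))) ^ ((1 - t) / t) *
        (∑ j, q j ^ (1 / (1 + t))) ^ (-((1 + t) / t)) ≤ R ^ 2) :
    (-∑ i, p i * Real.log (p i)) + (-∑ j, q j * Real.log (q j)) ≥ -2 * Real.log R := by
  set g : ℝ → ℝ := fun t => (1 - t) * log (∑ i, p i ^ (1 / (1 - t))) -
    (1 + t) * log (∑ j, q j ^ (1 / (1 + t)))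
  have hg : HasDerivAt g (∑ i, p i * log (p i) + ∑ j, q j * log (q j)) 0 := by
    refine ((((hasDerivAt_id' 0).const_sub 1).mul_log_sum_rpow_one_div (by simp) hp hpsum).fun_sub
      (((hasDerivAt_id' 0).const_add 1).mul_log_sum_rpow_one_div (by simp) hq hqsum)).congr_deriv ?_
    ring
  have hslope : ∀ t ∈ Ioo (0 : ℝ) 1, slope g 0 t ≤ 2 * log R := by
    intro t ht
    have hA := sum_rpow_pos hp hpsum (1 / (1 - t))
    have hB := sum_rpow_pos hq hqsum (1 / (1 + t))
    have hlog := log_le_log (by positivity) (h t ht)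
    rw [log_mul (by positivity) (by positivity), log_rpow hA, log_rpow hB, log_pow,
      Nat.cast_ofNat] at hlog
    have hg0 : g 0 = 0 := by simp [g, hpsum, hqsum]
    rw [slope_def_field, hg0]
    convert hlog using 1
    simp only [g]
    field_simp [ht.1.ne']
    ring
  have hderiv := hg.le_of_slope_le (eventually_of_mem (Ioo_mem_nhdsGT one_pos) hslope)
  linarith

theorem entropy_bound_from_limit
    {m n : ℕ} (p : Fin m → ℝ) (q : Fin n → ℝ)
    (hp : ∀ i, 0 < p i) (hq : ∀ j, 0 < q j)
    (hpsum : ∑ i, p i = 1) (hqsum : ∑ j, q j = 1)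
    (R : ℝ) (hR : R ∈ Set.Ioc (0 : ℝ) 1)
    (h : ∀ t ∈ Set.Ioo (0 : ℝ) 1,
      (∑ i, p i ^ (1 / (1 - t))) ^ ((1 - t) / t) *
        (∑ j, q j ^ (1 / (1 + t))) ^ (-((1 + t) / t)) ≤ R ^ 2) :
    (-∑ i, p i * Real.log (p i)) + (-∑ j, q j * Real.log (q j)) ≥ -2 * Real.log R :=
  entropy_bound_from_limit_general p q hp hq hpsum hqsum R h
end

section
/- Let P = (P_1,...,P_m) be a projective measurement and Y = (Y_1,...,Y_n) an arbitrary measurement (positive operators with Σ Y_j = I) on a finite-dimensional complex Hilbert space, and let ψ be a unit vector. Then H(P,ψ) + H(Y,ψ) ≥ -2 log₂ max_{i,j} |⟨ψ, P_i Y_j ψ⟩| / (‖P_i ψ‖ ‖Y_j^{1/2} ψ‖), where the maximum is over i,j with P_i ψ ≠ 0 and Y_j^{1/2} ψ ≠ 0. -/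
open Complex Finset in
lemma keyInterp {I J : Type*} (sa : Finset I) (sb : Finset J)
    (a : I → ℝ) (b : J → ℝ) (T : J → I → ℂ) (c θ : ℝ)
    (hc : 0 < c) (hθ0 : 0 < θ) (hθ1 : θ < 1)
    (ha : ∀ i ∈ sa, 0 < a i) (hb : ∀ j ∈ sb, 0 < b j)
    (hsa : sa.Nonempty) (hsb : sb.Nonempty)
    (hT : ∀ j ∈ sb, ∀ i ∈ sa, ‖T j i‖ ≤ c)
    (hop : ∀ x : I → ℂ, ∑ j ∈ sb, ‖∑ i ∈ sa, T j i * x i‖^2 ≤ ∑ i ∈ sa, ‖x i‖^2)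
    (hrow : ∀ j ∈ sb, ∑ i ∈ sa, T j i * (a i : ℂ) = (b j : ℂ)) :
    (∑ j ∈ sb, Real.exp ((2/(1-θ)) * Real.log (b j)))
      ≤ Real.exp (θ * Real.log c) *
        Real.exp (((1+θ)/2) * Real.log ((∑ i ∈ sa, Real.exp ((2/(1+θ)) * Real.log (a i))) *
                                        (∑ j ∈ sb, Real.exp ((2/(1-θ)) * Real.log (b j))))) := by
  have hθ1' : (0:ℝ) < 1 - θ := by linarith
  have hθ1'' : (0:ℝ) < 1 + θ := by linarith
  set lc := Real.log c with hlc
  set la : I → ℝ := fun i => Real.log (a i) / (1+θ) with hla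
  set lb : J → ℝ := fun j => Real.log (b j) / (1-θ) with hlb
  set A := ∑ i ∈ sa, Real.exp ((2/(1+θ)) * Real.log (a i)) with hA
  set B := ∑ j ∈ sb, Real.exp ((2/(1-θ)) * Real.log (b j)) with hB
  have hApos : 0 < A := Finset.sum_pos (fun i _ => Real.exp_pos _) hsa
  have hBpos : 0 < B := Finset.sum_pos (fun j _ => Real.exp_pos _) hsb
  -- rewrite A, B in terms of la, lb
  have hAla : A = ∑ i ∈ sa, Real.exp (la i) ^ 2 := by
    refine Finset.sum_congr rfl fun i _ => ?_
    rw [sq, ← Real.exp_add, hla]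
    congr 1
    field_simp
    ring
  have hBlb : B = ∑ j ∈ sb, Real.exp (lb j) ^ 2 := by
    refine Finset.sum_congr rfl fun j _ => ?_
    rw [sq, ← Real.exp_add, hlb]
    congr 1
    field_simp
    ring
  set F : ℂ → ℂ := fun z => Complex.exp (-z * lc) *
    ∑ j ∈ sb, Complex.exp ((1+z) * lb j) * ∑ i ∈ sa, T j i * Complex.exp ((1+z) * la i) with hF
  -- norms of the exponential factors
  have hnexp : ∀ (z : ℂ) (r : ℝ), ‖Complex.exp ((1+z) * (r:ℂ))‖ = Real.exp ((1+z.re) * r) := by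
    intro z r
    rw [Complex.norm_exp]
    congr 1
    simp [Complex.mul_re]
  have hnexp0 : ∀ (z : ℂ), ‖Complex.exp (-z * (lc:ℂ))‖ = Real.exp (-z.re * lc) := by
    intro z
    rw [Complex.norm_exp]
    congr 1
    simp [Complex.mul_re]
  -- pointwise crude bound
  have hFbound : ∀ z : ℂ, ‖F z‖ ≤ Real.exp (-z.re * lc) *
      ∑ j ∈ sb, Real.exp ((1+z.re) * lb j) * ∑ i ∈ sa, ‖T j i‖ * Real.exp ((1+z.re) * la i) := by
    intro z
    rw [hF]
    simp only [norm_mul]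
    rw [hnexp0]
    gcongr
    calc ‖∑ j ∈ sb, Complex.exp ((1+z) * lb j) * ∑ i ∈ sa, T j i * Complex.exp ((1+z) * la i)‖
        ≤ ∑ j ∈ sb, ‖Complex.exp ((1+z) * lb j) * ∑ i ∈ sa, T j i * Complex.exp ((1+z) * la i)‖ :=
          norm_sum_le _ _
      _ ≤ ∑ j ∈ sb, Real.exp ((1+z.re) * lb j) * ∑ i ∈ sa, ‖T j i‖ * Real.exp ((1+z.re) * la i) := by
          refine Finset.sum_le_sum fun j hj => ?_
          rw [norm_mul, hnexp]
          gcongr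
          calc ‖∑ i ∈ sa, T j i * Complex.exp ((1+z) * la i)‖
              ≤ ∑ i ∈ sa, ‖T j i * Complex.exp ((1+z) * la i)‖ := norm_sum_le _ _
            _ = ∑ i ∈ sa, ‖T j i‖ * Real.exp ((1+z.re) * la i) := by
                refine Finset.sum_congr rfl fun i _ => ?_
                rw [norm_mul, hnexp]
  -- differentiability
  have hdiff : Differentiable ℂ F := by
    apply Differentiable.mul
    · apply Differentiable.cexp
      exact (differentiable_id.neg).mul_const _
    · apply Differentiable.fun_sum
      intro j hj
      apply Differentiable.mul
      · exact (((differentiable_const _).add differentiable_id).mul_const _).cexp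
      · apply Differentiable.fun_sum
        intro i hi
        exact (differentiable_const _).mul
          ((((differentiable_const _).add differentiable_id).mul_const _).cexp)
  -- bounded on the strip
  have hbdd : BddAbove ((norm ∘ F) '' (Complex.HadamardThreeLines.verticalClosedStrip 0 1)) := by
    refine ⟨Real.exp |lc| * ∑ j ∈ sb, Real.exp (2*|lb j|) * ∑ i ∈ sa, c * Real.exp (2*|la i|), ?_⟩
    rintro r ⟨z, hz, rfl⟩
    simp only [Function.comp_apply]
    refine (hFbound z).trans ?_
    have hz0 : 0 ≤ z.re := hz.1
    have hz1 : z.re ≤ 1 := hz.2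
    have h1z : ∀ r : ℝ, (1 + z.re) * r ≤ 2 * |r| := by
      intro r
      calc (1+z.re) * r ≤ (1+z.re) * |r| := by
            apply mul_le_mul_of_nonneg_left (le_abs_self r); linarith
        _ ≤ 2 * |r| := by apply mul_le_mul_of_nonneg_right _ (abs_nonneg r); linarith
    have e1 : Real.exp (-z.re * lc) ≤ Real.exp |lc| := by
      apply Real.exp_le_exp.mpr
      calc -z.re * lc ≤ |(-z.re) * lc| := le_abs_self _
        _ = z.re * |lc| := by rw [abs_mul, abs_neg, _root_.abs_of_nonneg hz0]
        _ ≤ 1 * |lc| := mul_le_mul_of_nonneg_right hz1 (abs_nonneg _)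
        _ = |lc| := one_mul _
    have e2 : ∑ j ∈ sb, Real.exp ((1+z.re) * lb j) * ∑ i ∈ sa, ‖T j i‖ * Real.exp ((1+z.re) * la i)
        ≤ ∑ j ∈ sb, Real.exp (2*|lb j|) * ∑ i ∈ sa, c * Real.exp (2*|la i|) := by
      refine Finset.sum_le_sum fun j hj => ?_
      have e3 : ∑ i ∈ sa, ‖T j i‖ * Real.exp ((1+z.re) * la i)
          ≤ ∑ i ∈ sa, c * Real.exp (2*|la i|) := by
        refine Finset.sum_le_sum fun i hi => ?_
        exact mul_le_mul (hT j hj i hi) (Real.exp_le_exp.mpr (h1z _)) (Real.exp_pos _).le hc.le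
      refine mul_le_mul (Real.exp_le_exp.mpr (h1z _)) e3 ?_ (Real.exp_pos _).le
      apply Finset.sum_nonneg; intro i hi; positivity
    have e4 : 0 ≤ ∑ j ∈ sb, Real.exp ((1+z.re) * lb j) *
        ∑ i ∈ sa, ‖T j i‖ * Real.exp ((1+z.re) * la i) := by
      apply Finset.sum_nonneg; intro j hj
      apply mul_nonneg (Real.exp_pos _).le
      apply Finset.sum_nonneg; intro i hi; positivity
    exact mul_le_mul e1 e2 e4 (Real.exp_pos _).le
  -- bound on Re z = 0
  have hline0 : ∀ z ∈ Complex.re ⁻¹' {(0:ℝ)}, ‖F z‖ ≤ Real.sqrt (A * B) := by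
    intro z hz
    have hz0 : z.re = 0 := hz
    have step1 : ‖F z‖ ≤ ∑ j ∈ sb, Real.exp (lb j) *
        ‖∑ i ∈ sa, T j i * Complex.exp ((1+z) * la i)‖ := by
      rw [hF, norm_mul, hnexp0, hz0]
      rw [neg_zero, zero_mul, Real.exp_zero, one_mul]
      calc ‖∑ j ∈ sb, Complex.exp ((1+z) * lb j) * ∑ i ∈ sa, T j i * Complex.exp ((1+z) * la i)‖
          ≤ ∑ j ∈ sb, ‖Complex.exp ((1+z) * lb j) * ∑ i ∈ sa, T j i * Complex.exp ((1+z) * la i)‖ :=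
            norm_sum_le _ _
        _ = ∑ j ∈ sb, Real.exp (lb j) * ‖∑ i ∈ sa, T j i * Complex.exp ((1+z) * la i)‖ := by
            refine Finset.sum_congr rfl fun j _ => ?_
            rw [norm_mul, hnexp, hz0]
            norm_num
    set v : J → ℝ := fun j => ‖∑ i ∈ sa, T j i * Complex.exp ((1+z) * la i)‖ with hv
    have hCS : (∑ j ∈ sb, Real.exp (lb j) * v j)^2
        ≤ (∑ j ∈ sb, Real.exp (lb j)^2) * (∑ j ∈ sb, (v j)^2) :=
      Finset.sum_mul_sq_le_sq_mul_sq _ _ _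
    have hv2 : (∑ j ∈ sb, (v j)^2) ≤ A := by
      have := hop (fun i => Complex.exp ((1+z) * la i))
      refine this.trans ?_
      rw [hAla]
      apply le_of_eq
      refine Finset.sum_congr rfl fun i _ => ?_
      rw [hnexp, hz0]
      norm_num
    have hsum_nonneg : 0 ≤ ∑ j ∈ sb, Real.exp (lb j) * v j := by
      apply Finset.sum_nonneg; intro j hj; positivity
    refine step1.trans ?_
    rw [show Real.sqrt (A*B) = Real.sqrt (A*B) from rfl]
    rw [Real.le_sqrt hsum_nonneg]
    calc (∑ j ∈ sb, Real.exp (lb j) * v j)^2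
        ≤ (∑ j ∈ sb, Real.exp (lb j)^2) * (∑ j ∈ sb, (v j)^2) := hCS
      _ = B * (∑ j ∈ sb, (v j)^2) := by rw [← hBlb]
      _ ≤ B * A := by apply mul_le_mul_of_nonneg_left hv2 hBpos.le
      _ = A * B := mul_comm _ _
    exact (mul_pos hApos hBpos).le
  -- bound on Re z = 1
  have hline1 : ∀ z ∈ Complex.re ⁻¹' {(1:ℝ)}, ‖F z‖ ≤ A * B := by
    intro z hz
    have hz1 : z.re = 1 := hz
    refine (hFbound z).trans ?_
    rw [hz1]
    have h1 : Real.exp (-1 * lc) = c⁻¹ := by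
      rw [neg_one_mul, Real.exp_neg, Real.exp_log hc]
    rw [h1]
    have h2 : ∀ j ∈ sb, Real.exp ((1+1) * lb j) * ∑ i ∈ sa, ‖T j i‖ * Real.exp ((1+1) * la i)
        ≤ Real.exp (2 * lb j) * (c * A) := by
      intro j hj
      have : (1:ℝ) + 1 = 2 := by norm_num
      rw [this]
      refine mul_le_mul_of_nonneg_left ?_ (Real.exp_pos _).le
      calc ∑ i ∈ sa, ‖T j i‖ * Real.exp (2 * la i)
          ≤ ∑ i ∈ sa, c * Real.exp (2 * la i) := by
            refine Finset.sum_le_sum fun i hi => ?_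
            exact mul_le_mul_of_nonneg_right (hT j hj i hi) (Real.exp_pos _).le
        _ = c * ∑ i ∈ sa, Real.exp (2 * la i) := by rw [Finset.mul_sum]
        _ = c * A := by
            congr 1
            rw [hAla]
            refine Finset.sum_congr rfl fun i _ => ?_
            rw [sq, ← Real.exp_add]; ring_nf
    calc c⁻¹ * ∑ j ∈ sb, Real.exp ((1+1) * lb j) * ∑ i ∈ sa, ‖T j i‖ * Real.exp ((1+1) * la i)
        ≤ c⁻¹ * ∑ j ∈ sb, Real.exp (2 * lb j) * (c * A) := by
          apply mul_le_mul_of_nonneg_left _ (inv_nonneg.mpr hc.le)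
          exact Finset.sum_le_sum h2
      _ = c⁻¹ * ((∑ j ∈ sb, Real.exp (2 * lb j)) * (c * A)) := by rw [← Finset.sum_mul]
      _ = (∑ j ∈ sb, Real.exp (2 * lb j)) * A * (c⁻¹ * c) := by ring
      _ = (∑ j ∈ sb, Real.exp (2 * lb j)) * A := by
          rw [inv_mul_cancel₀ hc.ne', mul_one]
      _ = B * A := by
          congr 1
          rw [hBlb]
          refine Finset.sum_congr rfl fun j _ => ?_
          rw [sq, ← Real.exp_add]; ring_nf
      _ = A * B := mul_comm _ _
  -- value at θ
  have hinner : ∀ i ∈ sa, Complex.exp ((1+(θ:ℂ)) * la i) = ((a i : ℝ) : ℂ) := by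
    intro i hi
    have h0 : ((1+(θ:ℂ)) * la i) = (((1+θ) * la i : ℝ) : ℂ) := by push_cast; ring
    rw [h0, ← Complex.ofReal_exp]
    congr 1
    rw [hla]
    have h1 : (1+θ) * (Real.log (a i) / (1+θ)) = Real.log (a i) := by field_simp
    rw [h1, Real.exp_log (ha i hi)]
  have houter : ∀ j ∈ sb, Complex.exp ((1+(θ:ℂ)) * lb j) * ((b j : ℝ) : ℂ)
      = ((Real.exp ((2/(1-θ)) * Real.log (b j)) : ℝ) : ℂ) := by
    intro j hj
    have h0 : ((1+(θ:ℂ)) * lb j) = (((1+θ) * lb j : ℝ) : ℂ) := by push_cast; ring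
    rw [h0, ← Complex.ofReal_exp, ← Complex.ofReal_mul]
    congr 1
    rw [hlb]
    have hbj := hb j hj
    nth_rewrite 1 [show (b j) = Real.exp (Real.log (b j)) from (Real.exp_log hbj).symm]
    rw [← Real.exp_add]
    congr 1
    field_simp
    ring
  have hsum : (∑ j ∈ sb, Complex.exp ((1+(θ:ℂ)) * lb j) *
      ∑ i ∈ sa, T j i * Complex.exp ((1+(θ:ℂ)) * la i)) = ((B:ℝ):ℂ) := by
    have hterm : ∀ j ∈ sb, Complex.exp ((1+(θ:ℂ)) * lb j) *
        ∑ i ∈ sa, T j i * Complex.exp ((1+(θ:ℂ)) * la i)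
        = ((Real.exp ((2/(1-θ)) * Real.log (b j)) : ℝ) : ℂ) := by
      intro j hj
      have hinner2 : (∑ i ∈ sa, T j i * Complex.exp ((1+(θ:ℂ)) * la i)) = ((b j : ℝ):ℂ) := by
        rw [← hrow j hj]
        exact Finset.sum_congr rfl fun i hi => by rw [hinner i hi]
      rw [hinner2]
      exact houter j hj
    calc (∑ j ∈ sb, Complex.exp ((1+(θ:ℂ)) * lb j) *
        ∑ i ∈ sa, T j i * Complex.exp ((1+(θ:ℂ)) * la i))
        = ∑ j ∈ sb, ((Real.exp ((2/(1-θ)) * Real.log (b j)) : ℝ):ℂ) :=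
          Finset.sum_congr rfl hterm
      _ = ((B:ℝ):ℂ) := by rw [hB]; norm_cast
  have hFθval : F (θ:ℂ) = Complex.exp (-(θ:ℂ) * lc) * ((B:ℝ):ℂ) := by
    simp only [hF]
    rw [hsum]
  have hFθ : ‖F (θ:ℂ)‖ = Real.exp (-θ * lc) * B := by
    rw [hFθval, norm_mul]
    have h0 : ‖Complex.exp (-(θ:ℂ) * (lc:ℂ))‖ = Real.exp (-θ * lc) := by
      have := hnexp0 (θ:ℂ)
      simpa using this
    rw [h0, Complex.norm_real, Real.norm_eq_abs, _root_.abs_of_pos hBpos]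
  -- apply three lines
  have hmem : (θ:ℂ) ∈ Complex.HadamardThreeLines.verticalClosedStrip 0 1 := by
    simp [Complex.HadamardThreeLines.verticalClosedStrip]
    constructor <;> [exact hθ0.le; exact hθ1.le]
  have h3l := Complex.HadamardThreeLines.norm_le_interp_of_mem_verticalClosedStrip' (f := F) zero_lt_one hmem
    (hdiff.diffContOnCl) hbdd hline0 hline1
  rw [hFθ] at h3l
  have hre : (θ:ℂ).re = θ := by simp
  rw [hre] at h3l
  -- algebra on the RHS
  have hABpos : 0 < A * B := mul_pos hApos hBpos
  have hrhs : Real.sqrt (A*B) ^ (1-θ) * (A*B) ^ θ = Real.exp (((1+θ)/2) * Real.log (A*B)) := by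
    rw [Real.sqrt_eq_rpow, ← Real.rpow_mul hABpos.le, ← Real.rpow_add hABpos,
      Real.rpow_def_of_pos hABpos]
    congr 1
    ring
  simp only [sub_zero, div_one] at h3l
  rw [hrhs] at h3l
  calc B = Real.exp (θ*lc) * (Real.exp (-θ*lc) * B) := by
        rw [← mul_assoc, ← Real.exp_add]
        norm_num
    _ ≤ Real.exp (θ*lc) * Real.exp (((1+θ)/2) * Real.log (A*B)) :=
        mul_le_mul_of_nonneg_left h3l (Real.exp_pos _).le

open Finset in
lemma keyLimit {I J : Type*} (sa : Finset I) (sb : Finset J)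
    (a : I → ℝ) (b : J → ℝ) (c : ℝ) (hc : 0 < c)
    (ha : ∀ i ∈ sa, 0 < a i) (hb : ∀ j ∈ sb, 0 < b j)
    (ha2 : ∑ i ∈ sa, (a i) ^ 2 = 1) (hb2 : ∑ j ∈ sb, (b j) ^ 2 = 1)
    (hineq : ∀ θ : ℝ, 0 < θ → θ < 1 →
      (∑ j ∈ sb, Real.exp ((2/(1-θ)) * Real.log (b j)))
        ≤ Real.exp (θ * Real.log c) *
          Real.exp (((1+θ)/2) * Real.log ((∑ i ∈ sa, Real.exp ((2/(1+θ)) * Real.log (a i))) *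
                                          (∑ j ∈ sb, Real.exp ((2/(1-θ)) * Real.log (b j)))))) :
    -2 * Real.log c ≤
      (-∑ i ∈ sa, (a i)^2 * Real.log ((a i)^2)) + (-∑ j ∈ sb, (b j)^2 * Real.log ((b j)^2)) := by
  classical
  have hsa : sa.Nonempty := by
    by_contra h
    rw [Finset.not_nonempty_iff_eq_empty] at h
    rw [h] at ha2
    simp at ha2
  have hsb : sb.Nonempty := by
    by_contra h
    rw [Finset.not_nonempty_iff_eq_empty] at h
    rw [h] at hb2
    simp at hb2
  set A : ℝ → ℝ := fun θ => ∑ i ∈ sa, Real.exp ((2/(1+θ)) * Real.log (a i)) with hA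
  set B : ℝ → ℝ := fun θ => ∑ j ∈ sb, Real.exp ((2/(1-θ)) * Real.log (b j)) with hB
  set Hp : ℝ := -∑ i ∈ sa, (a i)^2 * Real.log ((a i)^2) with hHp
  set Hq : ℝ := -∑ j ∈ sb, (b j)^2 * Real.log ((b j)^2) with hHq
  have hApos : ∀ θ, 0 < A θ := fun θ => Finset.sum_pos (fun i _ => Real.exp_pos _) hsa
  have hBpos : ∀ θ, 0 < B θ := fun θ => Finset.sum_pos (fun j _ => Real.exp_pos _) hsb
  have hA0 : A 0 = 1 := by
    simp only [hA]
    have hterm : ∀ i ∈ sa, Real.exp ((2/(1+(0:ℝ))) * Real.log (a i)) = a i ^ 2 := by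
      intro i hi
      rw [show (2/(1+(0:ℝ))) * Real.log (a i) = Real.log (a i) + Real.log (a i) by ring,
        Real.exp_add, Real.exp_log (ha i hi), sq]
    rw [Finset.sum_congr rfl hterm, ha2]
  have hB0 : B 0 = 1 := by
    simp only [hB]
    have hterm : ∀ j ∈ sb, Real.exp ((2/(1-(0:ℝ))) * Real.log (b j)) = b j ^ 2 := by
      intro j hj
      rw [show (2/(1-(0:ℝ))) * Real.log (b j) = Real.log (b j) + Real.log (b j) by ring,
        Real.exp_add, Real.exp_log (hb j hj), sq]
    rw [Finset.sum_congr rfl hterm, hb2]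
  -- derivative of A at 0
  have hdA : HasDerivAt A Hp 0 := by
    rw [hHp]
    have : ∀ i ∈ sa, HasDerivAt (fun θ : ℝ => Real.exp ((2/(1+θ)) * Real.log (a i)))
        (-((a i)^2 * Real.log ((a i)^2))) 0 := by
      intro i hi
      have h1 : HasDerivAt (fun θ : ℝ => 1 + θ) 1 0 := by
        simpa using (hasDerivAt_id (0:ℝ)).const_add 1
      have h2 : HasDerivAt (fun θ : ℝ => (1 + θ)⁻¹) (-1) 0 := by
        have := h1.inv (by norm_num)
        exact this.congr_deriv (by norm_num)
      have h3 : HasDerivAt (fun θ : ℝ => (2/(1+θ)) * Real.log (a i))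
          (-2 * Real.log (a i)) 0 := by
        have heq : (fun θ : ℝ => (2/(1+θ)) * Real.log (a i))
            = fun θ : ℝ => ((2:ℝ) * (1+θ)⁻¹) * Real.log (a i) := by
          funext θ; rw [div_eq_mul_inv]
        rw [heq]
        have h3' := (h2.const_mul (2:ℝ)).mul_const (Real.log (a i))
        exact h3'.congr_deriv (by ring)
      have h4 := h3.exp
      convert h4 using 1
      have : (2/(1+(0:ℝ))) * Real.log (a i) = Real.log ((a i)^2) := by
        rw [Real.log_pow]
        push_cast
        norm_num
      rw [this, Real.exp_log (pow_pos (ha i hi) 2)]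
      rw [Real.log_pow]
      push_cast
      ring
    have := HasDerivAt.fun_sum this
    exact this.congr_deriv (by rw [← Finset.sum_neg_distrib])
  -- derivative of B at 0
  have hdB : HasDerivAt B (-Hq) 0 := by
    rw [hHq]
    have : ∀ j ∈ sb, HasDerivAt (fun θ : ℝ => Real.exp ((2/(1-θ)) * Real.log (b j)))
        ((b j)^2 * Real.log ((b j)^2)) 0 := by
      intro j hj
      have h1 : HasDerivAt (fun θ : ℝ => 1 - θ) (-1) 0 := by
        exact (hasDerivAt_id (0:ℝ)).const_sub 1
      have h2 : HasDerivAt (fun θ : ℝ => (1 - θ)⁻¹) 1 0 := by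
        have := h1.inv (by norm_num)
        exact this.congr_deriv (by norm_num)
      have h3 : HasDerivAt (fun θ : ℝ => (2/(1-θ)) * Real.log (b j))
          (2 * Real.log (b j)) 0 := by
        have heq : (fun θ : ℝ => (2/(1-θ)) * Real.log (b j))
            = fun θ : ℝ => ((2:ℝ) * (1-θ)⁻¹) * Real.log (b j) := by
          funext θ; rw [div_eq_mul_inv]
        rw [heq]
        have h3' := (h2.const_mul (2:ℝ)).mul_const (Real.log (b j))
        exact h3'.congr_deriv (by ring)
      have h4 := h3.exp
      convert h4 using 1
      have : (2/(1-(0:ℝ))) * Real.log (b j) = Real.log ((b j)^2) := by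
        rw [Real.log_pow]
        push_cast
        norm_num
      rw [this, Real.exp_log (pow_pos (hb j hj) 2)]
      rw [Real.log_pow]
      push_cast
      ring
    have := HasDerivAt.fun_sum this
    exact this.congr_deriv (by simp)
  -- the function f
  set f : ℝ → ℝ := fun θ => θ * Real.log c + ((1+θ)/2) * Real.log (A θ)
    - ((1-θ)/2) * Real.log (B θ) with hf
  have hf0 : f 0 = 0 := by
    rw [hf]
    simp [hA0, hB0]
  have hdf : HasDerivAt f (Real.log c + Hp/2 + Hq/2) 0 := by
    have d1 : HasDerivAt (fun θ : ℝ => θ * Real.log c) (Real.log c) 0 := by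
      simpa using (hasDerivAt_id (0:ℝ)).mul_const (Real.log c)
    have d2 : HasDerivAt (fun θ : ℝ => Real.log (A θ)) Hp 0 := by
      have := hdA.log (by rw [hA0]; norm_num)
      simpa [hA0] using this
    have d3 : HasDerivAt (fun θ : ℝ => Real.log (B θ)) (-Hq) 0 := by
      have := hdB.log (by rw [hB0]; norm_num)
      simpa [hB0] using this
    have d4 : HasDerivAt (fun θ : ℝ => (1+θ)/2) (1/2) 0 := by
      have := ((hasDerivAt_id (0:ℝ)).const_add 1).div_const 2
      simpa using this
    have d5 : HasDerivAt (fun θ : ℝ => (1-θ)/2) (-(1/2)) 0 := by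
      have : HasDerivAt (fun θ : ℝ => 1 - θ) (-1) 0 := by
        exact (hasDerivAt_id (0:ℝ)).const_sub 1
      have h6 := this.div_const 2
      norm_num at h6 ⊢
      exact h6
    have d6 := d4.mul d2
    have d7 := d5.mul d3
    have := (d1.add d6).sub d7
    refine this.congr_deriv ?_
    rw [hA0, hB0]
    simp [Real.log_one]
    ring
  -- nonnegativity of f on (0,1)
  have hfpos : ∀ θ : ℝ, 0 < θ → θ < 1 → 0 ≤ f θ := by
    intro θ h0 h1
    have h1θ : (0:ℝ) < 1 - θ := by linarith
    have h2θ : (0:ℝ) < 1 + θ := by linarith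
    have key := hineq θ h0 h1
    have hABpos : 0 < A θ * B θ := mul_pos (hApos θ) (hBpos θ)
    have hlog : Real.log (B θ) ≤ θ * Real.log c + ((1+θ)/2) * Real.log (A θ * B θ) := by
      have := Real.log_le_log (hBpos θ) key
      rwa [Real.log_mul (Real.exp_pos _).ne' (Real.exp_pos _).ne', Real.log_exp,
        Real.log_exp] at this
    rw [Real.log_mul (hApos θ).ne' (hBpos θ).ne'] at hlog
    rw [hf]
    simp only
    nlinarith [hlog]
  -- conclude via slope limit
  have hslope := hasDerivAt_iff_tendsto_slope.mp hdf
  have hmono : (nhdsWithin (0:ℝ) (Set.Ioi 0)) ≤ (nhdsWithin (0:ℝ) {(0:ℝ)}ᶜ) := by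
    apply nhdsWithin_mono
    intro x hx
    exact ne_of_gt hx
  have hslope' := hslope.mono_left hmono
  have hev : ∀ᶠ θ in nhdsWithin (0:ℝ) (Set.Ioi 0), 0 ≤ slope f 0 θ := by
    filter_upwards [Ioo_mem_nhdsGT_of_mem (by norm_num : (0:ℝ) ∈ Set.Ico 0 1)] with θ hθ
    rcases hθ with ⟨h0, h1⟩
    rw [slope_def_field, hf0]
    apply div_nonneg
    · simpa using hfpos θ h0 h1
    · simpa using h0.le
  have hlim : 0 ≤ Real.log c + Hp/2 + Hq/2 := by
    apply ge_of_tendsto hslope' hev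
  rw [hHp, hHq] at hlim
  linarith [hlim]

theorem entropic_uncertainty_projective_povm
    {H : Type*} [NormedAddCommGroup H] [InnerProductSpace ℂ H] [FiniteDimensional ℂ H]
    {m n : ℕ} (P : Fin m → H →L[ℂ] H) (Y : Fin n → H →L[ℂ] H)
    (hPsa : ∀ i, IsSelfAdjoint (P i)) (hPidem : ∀ i, P i ∘L P i = P i)
    (hPsum : ∑ i, P i = 1)
    (hY : ∀ j, (Y j).IsPositive) (hYsum : ∑ j, Y j = 1)
    (S : Fin n → H →L[ℂ] H) (hS : ∀ j, (S j).IsPositive ∧ S j ∘L S j = Y j)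
    (ψ : H) (hψ : ‖ψ‖ = 1) :
    (-∑ i, (inner ℂ ψ (P i ψ) : ℂ).re * Real.logb 2 (inner ℂ ψ (P i ψ) : ℂ).re) +
      (-∑ j, (inner ℂ ψ (Y j ψ) : ℂ).re * Real.logb 2 (inner ℂ ψ (Y j ψ) : ℂ).re) ≥
    -2 * Real.logb 2 (sSup {r : ℝ | ∃ i j, P i ψ ≠ 0 ∧ S j ψ ≠ 0 ∧
      r = ‖(inner ℂ ψ ((P i ∘L Y j) ψ) : ℂ)‖ / (‖P i ψ‖ * ‖S j ψ‖)}) := by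
  classical
  -- symmetry facts
  have hPsym : ∀ i, ∀ x y : H, (inner ℂ (P i x) y : ℂ) = inner ℂ x (P i y) := fun i =>
    (ContinuousLinearMap.isSelfAdjoint_iff_isSymmetric.mp (hPsa i))
  have hSsa : ∀ j, IsSelfAdjoint (S j) := fun j => (hS j).1.isSelfAdjoint
  have hSsym : ∀ j, ∀ x y : H, (inner ℂ (S j x) y : ℂ) = inner ℂ x (S j y) := fun j =>
    (ContinuousLinearMap.isSelfAdjoint_iff_isSymmetric.mp (hSsa j))
  set e : Fin m → H := fun i => P i ψ with he
  set f : Fin n → H := fun j => S j ψ with hfdef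
  set a : Fin m → ℝ := fun i => ‖e i‖ with hadef
  set b : Fin n → ℝ := fun j => ‖f j‖ with hbdef
  have hea : ∀ i, P i (e i) = e i := by
    intro i
    have := ContinuousLinearMap.ext_iff.mp (hPidem i) ψ
    simpa [ContinuousLinearMap.comp_apply] using this
  have hYapp : ∀ j (x : H), Y j x = S j (S j x) := by
    intro j x
    have := ContinuousLinearMap.ext_iff.mp (hS j).2 x
    simpa [ContinuousLinearMap.comp_apply] using this.symm
  have hcast : ∀ v : H, (inner ℂ v v : ℂ) = ((‖v‖ ^ 2 : ℝ) : ℂ) := by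
    intro v
    rw [inner_self_eq_norm_sq_to_K]
    norm_cast
  -- probabilities
  have hp : ∀ i, (inner ℂ ψ (P i ψ) : ℂ) = ((a i ^ 2 : ℝ) : ℂ) := by
    intro i
    calc (inner ℂ ψ (P i ψ) : ℂ) = inner ℂ ψ (P i (e i)) := by rw [hea i]
      _ = inner ℂ (P i ψ) (e i) := (hPsym i ψ (e i)).symm
      _ = inner ℂ (e i) (e i) := rfl
      _ = ((a i ^ 2 : ℝ) : ℂ) := hcast (e i)
  have hq : ∀ j, (inner ℂ ψ (Y j ψ) : ℂ) = ((b j ^ 2 : ℝ) : ℂ) := by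
    intro j
    calc (inner ℂ ψ (Y j ψ) : ℂ) = inner ℂ ψ (S j (f j)) := by rw [← hYapp j ψ]
      _ = inner ℂ (S j ψ) (f j) := (hSsym j ψ (f j)).symm
      _ = inner ℂ (f j) (f j) := rfl
      _ = ((b j ^ 2 : ℝ) : ℂ) := hcast (f j)
  have hpre : ∀ i, (inner ℂ ψ (P i ψ) : ℂ).re = a i ^ 2 := by
    intro i; rw [hp i, Complex.ofReal_re]
  have hqre : ∀ j, (inner ℂ ψ (Y j ψ) : ℂ).re = b j ^ 2 := by
    intro j; rw [hq j, Complex.ofReal_re]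
  have hψψ : (inner ℂ ψ ψ : ℂ) = 1 := by
    rw [hcast ψ, hψ]
    norm_num
  have hsumP : ∑ i, e i = ψ := by
    have := ContinuousLinearMap.ext_iff.mp hPsum ψ
    simpa [ContinuousLinearMap.sum_apply, ContinuousLinearMap.one_apply] using this
  have hsumYψ : ∀ x : H, ∑ j, Y j x = x := by
    intro x
    have := ContinuousLinearMap.ext_iff.mp hYsum x
    simpa [ContinuousLinearMap.sum_apply, ContinuousLinearMap.one_apply] using this
  have hsuma : ∑ i, a i ^ 2 = 1 := by
    have h1 : (∑ i, (inner ℂ ψ (P i ψ) : ℂ)) = inner ℂ ψ ψ := by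
      rw [← inner_sum, show (∑ i, P i ψ) = ψ from hsumP]
    rw [hψψ] at h1
    have h2 := congrArg Complex.re h1
    rw [Complex.re_sum] at h2
    simp only [hpre] at h2
    simpa using h2
  have hsumb : ∑ j, b j ^ 2 = 1 := by
    have h1 : (∑ j, (inner ℂ ψ (Y j ψ) : ℂ)) = inner ℂ ψ ψ := by
      rw [← inner_sum, hsumYψ ψ]
    rw [hψψ] at h1
    have h2 := congrArg Complex.re h1
    rw [Complex.re_sum] at h2
    simp only [hqre] at h2
    simpa using h2
  -- matrix entries
  set t : Fin n → Fin m → ℂ := fun j i => (inner ℂ (S j (e i)) (f j) : ℂ) with htdef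
  have htval : ∀ i j, (inner ℂ ψ ((P i ∘L Y j) ψ) : ℂ) = t j i := by
    intro i j
    calc (inner ℂ ψ ((P i ∘L Y j) ψ) : ℂ) = inner ℂ ψ (P i (Y j ψ)) := rfl
      _ = inner ℂ (P i ψ) (Y j ψ) := (hPsym i ψ (Y j ψ)).symm
      _ = inner ℂ (e i) (S j (f j)) := by rw [hYapp j ψ]
      _ = inner ℂ (S j (e i)) (f j) := (hSsym j (e i) (f j)).symm
  -- norm facts about S j
  have hSnorm : ∀ j (x : H), (inner ℂ x (Y j x) : ℂ).re = ‖S j x‖ ^ 2 := by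
    intro j x
    have h1 : (inner ℂ x (Y j x) : ℂ) = inner ℂ (S j x) (S j x) := by
      rw [hYapp j x, ← hSsym j x (S j x)]
    rw [h1, hcast (S j x), Complex.ofReal_re]
  have hYle : ∀ j (x : H), (inner ℂ x (Y j x) : ℂ).re ≤ ‖x‖ ^ 2 := by
    intro j x
    have hsplit : ∑ j', (inner ℂ x (Y j' x) : ℂ) = ((‖x‖ ^ 2 : ℝ) : ℂ) := by
      rw [← inner_sum, hsumYψ x, hcast x]
    have hre := congrArg Complex.re hsplit
    rw [Complex.re_sum, Complex.ofReal_re] at hre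
    have hterm : ∀ j', 0 ≤ (inner ℂ x (Y j' x) : ℂ).re := by
      intro j'
      have h0 := (hY j').inner_nonneg_right x
      simpa using (Complex.le_def.mp h0).1
    calc (inner ℂ x (Y j x) : ℂ).re ≤ ∑ j', (inner ℂ x (Y j' x) : ℂ).re :=
        Finset.single_le_sum (fun j' _ => hterm j') (Finset.mem_univ j)
      _ = ‖x‖ ^ 2 := hre
  have hScontr : ∀ j (x : H), ‖S j x‖ ≤ ‖x‖ := by
    intro j x
    have h1 : ‖S j x‖ ^ 2 ≤ ‖x‖ ^ 2 := by rw [← hSnorm j x]; exact hYle j x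
    have := Real.sqrt_le_sqrt h1
    rwa [Real.sqrt_sq (norm_nonneg _), Real.sqrt_sq (norm_nonneg _)] at this
  have htle : ∀ j i, ‖t j i‖ ≤ a i * b j := by
    intro j i
    calc ‖t j i‖ ≤ ‖S j (e i)‖ * ‖f j‖ := norm_inner_le_norm _ _
      _ ≤ ‖e i‖ * ‖f j‖ := mul_le_mul_of_nonneg_right (hScontr j (e i)) (norm_nonneg _)
      _ = a i * b j := rfl
  -- the supremum
  set c : ℝ := sSup {r : ℝ | ∃ i j, P i ψ ≠ 0 ∧ S j ψ ≠ 0 ∧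
      r = ‖(inner ℂ ψ ((P i ∘L Y j) ψ) : ℂ)‖ / (‖P i ψ‖ * ‖S j ψ‖)} with hcdef
  have hbddcs : BddAbove {r : ℝ | ∃ i j, P i ψ ≠ 0 ∧ S j ψ ≠ 0 ∧
      r = ‖(inner ℂ ψ ((P i ∘L Y j) ψ) : ℂ)‖ / (‖P i ψ‖ * ‖S j ψ‖)} := by
    refine ⟨1, ?_⟩
    rintro r ⟨i, j, hi, hj, rfl⟩
    have hai : 0 < a i := by simpa [hadef, norm_pos_iff] using hi
    have hbj : 0 < b j := by simpa [hbdef, norm_pos_iff] using hj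
    rw [htval i j]
    rw [div_le_one (by positivity)]
    calc ‖t j i‖ ≤ a i * b j := htle j i
      _ = ‖P i ψ‖ * ‖S j ψ‖ := rfl
    -- note: a i = ‖e i‖ = ‖P i ψ‖ definitionally
  have hmemle : ∀ i j, e i ≠ 0 → f j ≠ 0 → ‖t j i‖ / (a i * b j) ≤ c := by
    intro i j hi hj
    apply le_csSup hbddcs
    exact ⟨i, j, hi, hj, by rw [htval i j]⟩
  have hcpos : 0 < c := by
    have hex : ∃ i j, (inner ℂ ψ ((P i ∘L Y j) ψ) : ℂ) ≠ 0 := by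
      by_contra hcon
      push_neg at hcon
      have hzero : (∑ i, ∑ j, (inner ℂ ψ ((P i ∘L Y j) ψ) : ℂ)) = 0 := by
        apply Finset.sum_eq_zero
        intro i _
        exact Finset.sum_eq_zero fun j _ => hcon i j
      have hone : (∑ i, ∑ j, (inner ℂ ψ ((P i ∘L Y j) ψ) : ℂ)) = 1 := by
        have hrowsum : ∀ i, (∑ j, (inner ℂ ψ ((P i ∘L Y j) ψ) : ℂ)) = inner ℂ ψ (P i ψ) := by
          intro i
          rw [← inner_sum]
          congr 1
          simp only [ContinuousLinearMap.comp_apply]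
          rw [← map_sum, hsumYψ ψ]
        calc (∑ i, ∑ j, (inner ℂ ψ ((P i ∘L Y j) ψ) : ℂ)) = ∑ i, (inner ℂ ψ (P i ψ) : ℂ) :=
            Finset.sum_congr rfl fun i _ => hrowsum i
          _ = inner ℂ ψ ψ := by rw [← inner_sum, show (∑ i, P i ψ) = ψ from hsumP]
          _ = 1 := hψψ
      rw [hzero] at hone
      exact zero_ne_one hone
    obtain ⟨i, j, hij⟩ := hex
    rw [htval i j] at hij
    have hie : e i ≠ 0 := by
      intro h0
      apply hij
      rw [htdef]
      simp only [h0, map_zero, inner_zero_left]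
    have hjf : f j ≠ 0 := by
      intro h0
      apply hij
      rw [htdef]
      simp only [h0, inner_zero_right]
    have hai : 0 < a i := by simpa [hadef, norm_pos_iff] using hie
    have hbj : 0 < b j := by simpa [hbdef, norm_pos_iff] using hjf
    have hr : 0 < ‖t j i‖ / (a i * b j) := by
      apply div_pos (norm_pos_iff.mpr hij) (by positivity)
    exact lt_of_lt_of_le hr (hmemle i j hie hjf)
  -- index sets
  set sa : Finset (Fin m) := Finset.univ.filter (fun i => a i ≠ 0) with hsadef
  set sb : Finset (Fin n) := Finset.univ.filter (fun j => b j ≠ 0) with hsbdef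
  have hapos : ∀ i ∈ sa, 0 < a i := by
    intro i hi
    rw [hsadef, Finset.mem_filter] at hi
    exact lt_of_le_of_ne (norm_nonneg _) (Ne.symm hi.2)
  have hbpos : ∀ j ∈ sb, 0 < b j := by
    intro j hj
    rw [hsbdef, Finset.mem_filter] at hj
    exact lt_of_le_of_ne (norm_nonneg _) (Ne.symm hj.2)
  have hsa2 : ∑ i ∈ sa, a i ^ 2 = 1 := by
    rw [hsadef, Finset.sum_filter_of_ne, hsuma]
    intro i _ hne
    exact fun h0 => hne (by rw [h0]; norm_num)
  have hsb2 : ∑ j ∈ sb, b j ^ 2 = 1 := by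
    rw [hsbdef, Finset.sum_filter_of_ne, hsumb]
    intro j _ hne
    exact fun h0 => hne (by rw [h0]; norm_num)
  have hsane : sa.Nonempty := by
    by_contra hcon
    rw [Finset.not_nonempty_iff_eq_empty] at hcon
    rw [hcon] at hsa2
    simp at hsa2
  have hsbne : sb.Nonempty := by
    by_contra hcon
    rw [Finset.not_nonempty_iff_eq_empty] at hcon
    rw [hcon] at hsb2
    simp at hsb2
  -- the normalized matrix
  set T : Fin n → Fin m → ℂ := fun j i => t j i / (((a i * b j : ℝ)) : ℂ) with hTdef
  have hazero : ∀ i, a i = 0 → e i = 0 := fun i h0 => norm_eq_zero.mp h0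
  have htzeroa : ∀ j i, a i = 0 → t j i = 0 := by
    intro j i h0
    rw [htdef]
    simp only [hazero i h0, map_zero, inner_zero_left]
  have hT : ∀ j ∈ sb, ∀ i ∈ sa, ‖T j i‖ ≤ c := by
    intro j hj i hi
    have hai := hapos i hi
    have hbj := hbpos j hj
    rw [hTdef]
    simp only
    rw [norm_div, Complex.norm_real, Real.norm_eq_abs, abs_of_pos (by positivity)]
    exact hmemle i j (norm_ne_zero_iff.mp hai.ne') (norm_ne_zero_iff.mp hbj.ne')
  have hsumt : ∀ j, (∑ i ∈ sa, t j i) = ((b j ^ 2 : ℝ) : ℂ) := by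
    intro j
    have h1 : (∑ i ∈ sa, t j i) = ∑ i, t j i := by
      rw [hsadef]
      apply Finset.sum_filter_of_ne
      intro i _ hne
      exact fun h0 => hne (htzeroa j i h0)
    rw [h1, htdef]
    simp only
    calc (∑ i, (inner ℂ (S j (e i)) (f j) : ℂ)) = inner ℂ (∑ i, S j (e i)) (f j) :=
        (sum_inner _ _ _).symm
      _ = inner ℂ (S j (∑ i, e i)) (f j) := by rw [map_sum]
      _ = inner ℂ (f j) (f j) := by rw [hsumP]
      _ = ((b j ^ 2 : ℝ) : ℂ) := hcast (f j)
  have hrow : ∀ j ∈ sb, (∑ i ∈ sa, T j i * ((a i : ℝ) : ℂ)) = ((b j : ℝ) : ℂ) := by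
    intro j hj
    have hbj := hbpos j hj
    have hterm : ∀ i ∈ sa, T j i * ((a i : ℝ) : ℂ) = t j i * ((b j : ℝ) : ℂ)⁻¹ := by
      intro i hi
      have hai := hapos i hi
      rw [hTdef]
      simp only
      rw [div_eq_mul_inv]
      rw [Complex.ofReal_mul, mul_inv]
      have haiC : ((a i : ℝ) : ℂ) ≠ 0 := Complex.ofReal_ne_zero.mpr hai.ne'
      field_simp
    rw [Finset.sum_congr rfl hterm, ← Finset.sum_mul, hsumt j]
    have hbjC : ((b j : ℝ) : ℂ) ≠ 0 := Complex.ofReal_ne_zero.mpr hbj.ne'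
    field_simp
    push_cast
    ring
  -- the operator bound
  have hop : ∀ x : Fin m → ℂ, (∑ j ∈ sb, ‖∑ i ∈ sa, T j i * x i‖ ^ 2)
      ≤ ∑ i ∈ sa, ‖x i‖ ^ 2 := by
    intro x
    set φ : H := ∑ i ∈ sa, ((starRingEnd ℂ) (x i) / ((a i : ℝ) : ℂ)) • e i with hφdef
    -- orthogonality of the e i
    have hPP : ∀ i k, i ≠ k → P i (e k) = 0 := by
      intro i k hik
      have hsumsq : ∀ v : H, ∑ i', ‖P i' v‖ ^ 2 = ‖v‖ ^ 2 := by
        intro v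
        have h1 : ∀ i', (inner ℂ v (P i' v) : ℂ).re = ‖P i' v‖ ^ 2 := by
          intro i'
          have h2 : (inner ℂ v (P i' v) : ℂ) = inner ℂ (P i' v) (P i' v) := by
            have h3 : P i' (P i' v) = P i' v := by
              have := ContinuousLinearMap.ext_iff.mp (hPidem i') v
              simpa [ContinuousLinearMap.comp_apply] using this
            calc (inner ℂ v (P i' v) : ℂ) = inner ℂ v (P i' (P i' v)) := by rw [h3]
              _ = inner ℂ (P i' v) (P i' v) := (hPsym i' v (P i' v)).symm
          rw [h2, hcast (P i' v), Complex.ofReal_re]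
        have h4 : (∑ i', (inner ℂ v (P i' v) : ℂ)) = inner ℂ v v := by
          rw [← inner_sum]
          congr 1
          have := ContinuousLinearMap.ext_iff.mp hPsum v
          simpa [ContinuousLinearMap.sum_apply, ContinuousLinearMap.one_apply] using this
        have h5 := congrArg Complex.re h4
        rw [Complex.re_sum] at h5
        simp only [h1] at h5
        rw [h5, hcast v, Complex.ofReal_re]
      have h6 := hsumsq (e k)
      rw [← Finset.add_sum_erase _ _ (Finset.mem_univ k)] at h6
      have h7 : P k (e k) = e k := hea k
      rw [h7] at h6
      have h8 : ∑ i' ∈ Finset.univ.erase k, ‖P i' (e k)‖ ^ 2 = 0 := by linarith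
      have h9 := (Finset.sum_eq_zero_iff_of_nonneg
        (fun i' _ => sq_nonneg ‖P i' (e k)‖)).mp h8 i (Finset.mem_erase.mpr ⟨hik, Finset.mem_univ i⟩)
      rw [sq_eq_zero_iff, norm_eq_zero] at h9
      exact h9
    have hortho : ∀ i k, i ≠ k → (inner ℂ (e i) (e k) : ℂ) = 0 := by
      intro i k hik
      calc (inner ℂ (e i) (e k) : ℂ) = inner ℂ ψ (P i (e k)) := hPsym i ψ (e k)
        _ = 0 := by rw [hPP i k hik, inner_zero_right]
    -- ‖φ‖² = ∑ ‖x i‖²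
    have hφnorm : (inner ℂ φ φ : ℂ) = ((∑ i ∈ sa, ‖x i‖ ^ 2 : ℝ) : ℂ) := by
      rw [hφdef]
      rw [sum_inner]
      have hterm : ∀ i ∈ sa, (inner ℂ (((starRingEnd ℂ) (x i) / ((a i : ℝ) : ℂ)) • e i)
          (∑ k ∈ sa, ((starRingEnd ℂ) (x k) / ((a k : ℝ) : ℂ)) • e k) : ℂ)
          = ((‖x i‖ ^ 2 : ℝ) : ℂ) := by
        intro i hi
        rw [inner_sum]
        have hterm2 : ∀ k ∈ sa, (inner ℂ (((starRingEnd ℂ) (x i) / ((a i : ℝ) : ℂ)) • e i)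
            (((starRingEnd ℂ) (x k) / ((a k : ℝ) : ℂ)) • e k) : ℂ)
            = if k = i then ((‖x i‖ ^ 2 : ℝ) : ℂ) else 0 := by
          intro k hk
          rw [inner_smul_left, inner_smul_right]
          by_cases hik : k = i
          · subst hik
            rw [hcast (e k)]
            rw [if_pos rfl]
            have hak := hapos k hk
            have hakC : ((a k : ℝ) : ℂ) ≠ 0 := Complex.ofReal_ne_zero.mpr hak.ne'
            rw [map_div₀, Complex.conj_conj, Complex.conj_ofReal]
            rw [show ((‖e k‖ ^ 2 : ℝ) : ℂ) = ((a k : ℝ) : ℂ) * ((a k : ℝ) : ℂ) by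
              rw [show ‖e k‖ = a k from rfl]; push_cast; ring]
            rw [show (((‖x k‖ : ℝ) ^ 2 : ℝ) : ℂ) = x k * (starRingEnd ℂ) (x k) by
              rw [Complex.mul_conj, Complex.normSq_eq_norm_sq]]
            field_simp
          · rw [hortho i k (fun h => hik (h.symm)), mul_zero, mul_zero, if_neg hik]
        rw [Finset.sum_congr rfl hterm2, Finset.sum_ite_eq' sa i, if_pos hi]
      rw [Finset.sum_congr rfl hterm]
      push_cast
      ring
    -- each row bounded by ‖S j φ‖
    have hrowval : ∀ j ∈ sb, (∑ i ∈ sa, T j i * x i)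
        = (inner ℂ (S j φ) (f j) : ℂ) / ((b j : ℝ) : ℂ) := by
      intro j hj
      have hSφ : S j φ = ∑ i ∈ sa, ((starRingEnd ℂ) (x i) / ((a i : ℝ) : ℂ)) • S j (e i) := by
        rw [hφdef, map_sum]
        exact Finset.sum_congr rfl fun i _ => (S j).map_smul _ _
      rw [hSφ, sum_inner, Finset.sum_div]
      refine Finset.sum_congr rfl fun i hi => ?_
      rw [inner_smul_left, map_div₀, Complex.conj_conj, Complex.conj_ofReal]
      have hai := hapos i hi
      have hbj := hbpos j hj
      have haiC : ((a i : ℝ) : ℂ) ≠ 0 := Complex.ofReal_ne_zero.mpr hai.ne'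
      have hbjC : ((b j : ℝ) : ℂ) ≠ 0 := Complex.ofReal_ne_zero.mpr hbj.ne'
      rw [hTdef]
      simp only
      rw [Complex.ofReal_mul]
      field_simp
      ring
    have hrowle : ∀ j ∈ sb, ‖∑ i ∈ sa, T j i * x i‖ ^ 2 ≤ ‖S j φ‖ ^ 2 := by
      intro j hj
      rw [hrowval j hj]
      have hbj := hbpos j hj
      rw [norm_div, Complex.norm_real, Real.norm_eq_abs, abs_of_pos hbj]
      have h1 : ‖(inner ℂ (S j φ) (f j) : ℂ)‖ ≤ ‖S j φ‖ * b j := norm_inner_le_norm _ _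
      have h2 : ‖(inner ℂ (S j φ) (f j) : ℂ)‖ / b j ≤ ‖S j φ‖ := by
        rw [div_le_iff₀ hbj]
        exact h1
      have h3 : 0 ≤ ‖(inner ℂ (S j φ) (f j) : ℂ)‖ / b j := by positivity
      exact pow_le_pow_left₀ h3 h2 2
    have hsumS : ∑ j, ‖S j φ‖ ^ 2 = ‖φ‖ ^ 2 := by
      have h1 : ∀ j, ‖S j φ‖ ^ 2 = (inner ℂ φ (Y j φ) : ℂ).re := fun j => (hSnorm j φ).symm
      simp only [h1]
      have h2 : (∑ j, (inner ℂ φ (Y j φ) : ℂ)) = inner ℂ φ φ := by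
        rw [← inner_sum, hsumYψ φ]
      have h3 := congrArg Complex.re h2
      rw [Complex.re_sum] at h3
      rw [h3, hcast φ, Complex.ofReal_re]
    calc (∑ j ∈ sb, ‖∑ i ∈ sa, T j i * x i‖ ^ 2) ≤ ∑ j ∈ sb, ‖S j φ‖ ^ 2 :=
        Finset.sum_le_sum hrowle
      _ ≤ ∑ j, ‖S j φ‖ ^ 2 := Finset.sum_le_sum_of_subset_of_nonneg
          (Finset.filter_subset _ _) (fun j _ _ => sq_nonneg _)
      _ = ‖φ‖ ^ 2 := hsumS
      _ = ∑ i ∈ sa, ‖x i‖ ^ 2 := by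
          have h9 := congrArg Complex.re hφnorm
          rwa [hcast φ, Complex.ofReal_re, Complex.ofReal_re] at h9
  -- apply the two key lemmas
  have key := keyLimit sa sb a b c hcpos hapos hbpos hsa2 hsb2
    (fun θ h0 h1 => keyInterp sa sb a b T c θ hcpos h0 h1 hapos hbpos hsane hsbne hT hop hrow)
  -- convert to the goal
  have hlog2 : (0:ℝ) < Real.log 2 := Real.log_pos (by norm_num)
  have hlhs1 : (∑ i, (inner ℂ ψ (P i ψ) : ℂ).re * Real.logb 2 (inner ℂ ψ (P i ψ) : ℂ).re)
      = (∑ i ∈ sa, a i ^ 2 * Real.log (a i ^ 2)) / Real.log 2 := by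
    have h1 : ∀ i, (inner ℂ ψ (P i ψ) : ℂ).re * Real.logb 2 (inner ℂ ψ (P i ψ) : ℂ).re
        = a i ^ 2 * (Real.log (a i ^ 2) / Real.log 2) := by
      intro i
      rw [hpre i, Real.logb]
    rw [Finset.sum_congr rfl (fun i _ => h1 i)]
    rw [hsadef]
    rw [Finset.sum_filter_of_ne (fun i _ hne => ?_), Finset.sum_div]
    · exact Finset.sum_congr rfl fun i _ => by ring
    · intro h0
      apply hne
      rw [h0]
      norm_num
  have hlhs2 : (∑ j, (inner ℂ ψ (Y j ψ) : ℂ).re * Real.logb 2 (inner ℂ ψ (Y j ψ) : ℂ).re)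
      = (∑ j ∈ sb, b j ^ 2 * Real.log (b j ^ 2)) / Real.log 2 := by
    have h1 : ∀ j, (inner ℂ ψ (Y j ψ) : ℂ).re * Real.logb 2 (inner ℂ ψ (Y j ψ) : ℂ).re
        = b j ^ 2 * (Real.log (b j ^ 2) / Real.log 2) := by
      intro j
      rw [hqre j, Real.logb]
    rw [Finset.sum_congr rfl (fun j _ => h1 j)]
    rw [hsbdef]
    rw [Finset.sum_filter_of_ne (fun j _ hne => ?_), Finset.sum_div]
    · exact Finset.sum_congr rfl fun j _ => by ring
    · intro h0
      apply hne
      rw [h0]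
      norm_num
  rw [ge_iff_le, hlhs1, hlhs2, Real.logb]
  rw [show (-2 : ℝ) * (Real.log c / Real.log 2) = (-2 * Real.log c) / Real.log 2 by ring]
  rw [show -((∑ i ∈ sa, a i ^ 2 * Real.log (a i ^ 2)) / Real.log 2)
      + -((∑ j ∈ sb, b j ^ 2 * Real.log (b j ^ 2)) / Real.log 2)
      = ((-∑ i ∈ sa, a i ^ 2 * Real.log (a i ^ 2))
        + (-∑ j ∈ sb, b j ^ 2 * Real.log (b j ^ 2))) / Real.log 2 by ring]
  rw [div_le_div_iff_of_pos_right hlog2]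
  exact key
end

section
/- Let X = (X_1,...,X_m) and Y = (Y_1,...,Y_n) be arbitrary measurements (POVMs) on a finite-dimensional complex Hilbert space and let ψ be a unit vector. Then H(X,ψ) + H(Y,ψ) ≥ -2 log₂ max_{i,j} |⟨ψ, X_i Y_j ψ⟩| / (‖X_i^{1/2} ψ‖ ‖Y_j^{1/2} ψ‖), where the maximum is over i,j with X_i^{1/2} ψ ≠ 0 and Y_j^{1/2} ψ ≠ 0. -/
/-!
Write `p i = ⟪ψ, X i ψ⟫ = ‖√X i ψ‖²`, `q j = ‖√Y j ψ‖²` and `z i j = ⟪ψ, X i Y j ψ⟫`: a complex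
matrix with row sums `p` and column sums `q`, and with `|z i j| ≤ c √(p i q j)` for the constant `c`
of the theorem. The entire function `F s = ∑ z i j (√(p i q j) / c) ^ s` satisfies `F 0 = 1`,
`|F| ≤ 1` on `re s = 1` by the choice of `c`, and `|F| ≤ 1` on `re s = 0`, where
`F s = ⟪∑ ū i X i ψ, ∑ v j Y j ψ⟫` with unimodular `u, v` and `‖∑ λ i X i ψ‖ ≤ ‖ψ‖` whenever
`|λ i| ≤ 1`. By Hadamard's three lines theorem `re F ≤ 1` on `[0, 1]`, so `re F'(0) ≤ 0`, and
`re F'(0) = (∑ p log p + ∑ q log q) / 2 - log c`.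
-/

open Finset
open scoped InnerProductSpace

namespace ContinuousLinearMap

variable {𝕜 E : Type*} [RCLike 𝕜] [NormedAddCommGroup E] [InnerProductSpace 𝕜 E]

theorem sum_inner_comp_apply_of_sum_eq_one_left {ι : Type*} [Fintype ι] {A : ι → E →L[𝕜] E}
    (hA : ∑ i, A i = 1) (B : E →L[𝕜] E) (x y : E) : ∑ i, ⟪x, (A i ∘L B) y⟫_𝕜 = ⟪x, B y⟫_𝕜 := by
  rw [← inner_sum, ← _root_.sum_apply, ← finsetSum_comp, hA, comp_apply, one_apply_eq_self]

theorem sum_inner_comp_apply_of_sum_eq_one_right {ι : Type*} [Fintype ι] {B : ι → E →L[𝕜] E}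
    (hB : ∑ i, B i = 1) (A : E →L[𝕜] E) (x y : E) : ∑ i, ⟪x, (A ∘L B i) y⟫_𝕜 = ⟪x, A y⟫_𝕜 := by
  simp only [comp_apply]
  rw [← inner_sum, ← map_sum, ← _root_.sum_apply, hB, one_apply_eq_self]

section Sqrt

variable {A S : E →L[𝕜] E} (hS : S.IsSymmetric) (hSA : S ∘L S = A)
include hS hSA

theorem inner_apply_eq_inner_sqrt (x y : E) : ⟪x, A y⟫_𝕜 = ⟪S x, S y⟫_𝕜 := by
  rw [hS.apply_clm x (S y), ← hSA, comp_apply]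

theorem inner_apply_left_eq_inner_sqrt (x y : E) : ⟪A x, y⟫_𝕜 = ⟪S x, S y⟫_𝕜 := by
  rw [← hS.apply_clm (S x) y, ← hSA, comp_apply]

theorem inner_self_apply_eq_norm_sqrt_sq (x : E) : ⟪x, A x⟫_𝕜 = (‖S x‖ ^ 2 : ℝ) := by
  rw [inner_apply_eq_inner_sqrt hS hSA, inner_self_eq_norm_sq_to_K, RCLike.ofReal_pow]

theorem inner_comp_apply_eq_zero_of_sqrt_apply_eq_zero_left {B : E →L[𝕜] E} {ψ : E}
    (h : S ψ = 0) : ⟪ψ, (A ∘L B) ψ⟫_𝕜 = 0 := by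
  rw [comp_apply, inner_apply_eq_inner_sqrt hS hSA, h, inner_zero_left]

theorem inner_comp_apply_eq_zero_of_sqrt_apply_eq_zero_right {B T : E →L[𝕜] E}
    (hT : T.IsSymmetric) (hTB : T ∘L T = B) {ψ : E} (h : T ψ = 0) : ⟪ψ, (A ∘L B) ψ⟫_𝕜 = 0 := by
  rw [comp_apply, inner_apply_eq_inner_sqrt hS hSA, ← inner_apply_left_eq_inner_sqrt hS hSA,
    inner_apply_eq_inner_sqrt hT hTB, h, inner_zero_right]

end Sqrt

section Resolution

variable {ι : Type*} [Fintype ι] {A S : ι → E →L[𝕜] E}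
  (hS : ∀ i, (S i).IsSymmetric) (hSA : ∀ i, S i ∘L S i = A i) (hA : ∑ i, A i = 1)
include hS hSA hA

theorem sum_norm_sqrt_apply_sq (w : E) : ∑ i, ‖S i w‖ ^ 2 = ‖w‖ ^ 2 := by
  have h : ∑ i, ⟪w, A i w⟫_𝕜 = ⟪w, w⟫_𝕜 := by
    rw [← inner_sum, ← _root_.sum_apply, hA, one_apply_eq_self]
  simp only [inner_self_apply_eq_norm_sqrt_sq (hS _) (hSA _), inner_self_eq_norm_sq_to_K] at h
  exact_mod_cast h

theorem norm_inner_sum_smul_apply_le {c : ι → 𝕜} (hc : ∀ i, ‖c i‖ ≤ 1) (v w : E) :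
    ‖⟪v, ∑ i, c i • A i w⟫_𝕜‖ ≤ ‖v‖ * ‖w‖ :=
  calc ‖⟪v, ∑ i, c i • A i w⟫_𝕜‖ = ‖∑ i, c i * ⟪S i v, S i w⟫_𝕜‖ := by
        simp only [inner_sum, inner_smul_right, inner_apply_eq_inner_sqrt (hS _) (hSA _)]
    _ ≤ ∑ i, ‖S i v‖ * ‖S i w‖ := by
        refine (norm_sum_le _ _).trans (sum_le_sum fun i _ => ?_)
        rw [norm_mul]
        exact (mul_le_of_le_one_left (norm_nonneg _) (hc i)).trans (norm_inner_le_norm _ _)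
    _ ≤ √(∑ i, ‖S i v‖ ^ 2) * √(∑ i, ‖S i w‖ ^ 2) := Real.sum_mul_le_sqrt_mul_sqrt _ _ _
    _ = ‖v‖ * ‖w‖ := by
        rw [sum_norm_sqrt_apply_sq hS hSA hA, sum_norm_sqrt_apply_sq hS hSA hA,
          Real.sqrt_sq (norm_nonneg _), Real.sqrt_sq (norm_nonneg _)]

theorem norm_sum_smul_apply_le {c : ι → 𝕜} (hc : ∀ i, ‖c i‖ ≤ 1) (w : E) :
    ‖∑ i, c i • A i w‖ ≤ ‖w‖ := by
  set v := ∑ i, c i • A i w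
  have h := norm_inner_sum_smul_apply_le hS hSA hA hc v w
  rw [inner_self_eq_norm_sq_to_K, norm_pow, RCLike.norm_ofReal, abs_norm, sq] at h
  nlinarith [norm_nonneg v, norm_nonneg w]

theorem norm_sum_sum_mul_inner_comp_apply_le {κ : Type*} [Fintype κ] {B T : κ → E →L[𝕜] E}
    (hT : ∀ j, (T j).IsSymmetric) (hTB : ∀ j, T j ∘L T j = B j) (hB : ∑ j, B j = 1)
    {u : ι → 𝕜} {v : κ → 𝕜} (hu : ∀ i, ‖u i‖ ≤ 1) (hv : ∀ j, ‖v j‖ ≤ 1) (ψ : E) :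
    ‖∑ i, ∑ j, u i * ⟪ψ, (A i ∘L B j) ψ⟫_𝕜 * v j‖ ≤ ‖ψ‖ ^ 2 := by
  have hinner : ∑ i, ∑ j, u i * ⟪ψ, (A i ∘L B j) ψ⟫_𝕜 * v j =
      ⟪∑ i, (starRingEnd 𝕜) (u i) • A i ψ, ∑ j, v j • B j ψ⟫_𝕜 := by
    rw [sum_inner]
    simp only [inner_sum, inner_smul_left, inner_smul_right, RCLike.conj_conj,
      inner_apply_left_eq_inner_sqrt (hS _) (hSA _), comp_apply,
      inner_apply_eq_inner_sqrt (hS _) (hSA _)]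
    exact sum_congr rfl fun i _ => sum_congr rfl fun j _ => by ring
  calc _ ≤ ‖∑ i, (starRingEnd 𝕜) (u i) • A i ψ‖ * ‖ψ‖ := by
        rw [hinner]; exact norm_inner_sum_smul_apply_le hT hTB hB hv _ ψ
    _ ≤ ‖ψ‖ * ‖ψ‖ := by
        gcongr
        exact norm_sum_smul_apply_le hS hSA hA (fun i => by rw [RCLike.norm_conj]; exact hu i) ψ
    _ = ‖ψ‖ ^ 2 := (sq _).symm

end Resolution

end ContinuousLinearMap

open Complex HadamardThreeLines

theorem re_nonpos_of_hasDerivAt_of_norm_le_one_on_verticalStrip {f : ℂ → ℂ} {f' : ℂ}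
    (hd : DiffContOnCl ℂ f (verticalStrip 0 1))
    (hB : BddAbove ((norm ∘ f) '' verticalClosedStrip 0 1))
    (h₀ : ∀ z ∈ re ⁻¹' {0}, ‖f z‖ ≤ 1) (h₁ : ∀ z ∈ re ⁻¹' {1}, ‖f z‖ ≤ 1)
    (hf0 : f 0 = 1) (hf' : HasDerivAt f f' 0) : f'.re ≤ 0 := by
  have hmax : IsMaxOn (fun t : ℝ => (f t).re) (Set.Icc 0 1) 0 := fun t ht => by
    have hmem : (t : ℂ) ∈ verticalClosedStrip 0 1 := by simpa [verticalClosedStrip] using ht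
    have := norm_le_interp_of_mem_verticalClosedStrip' zero_lt_one hmem hd hB h₀ h₁
    simp only [ofReal_zero, hf0, one_re]
    exact (re_le_norm _).trans (by simpa using this)
  have hderiv : HasDerivAt (fun t : ℝ => (f t).re) f'.re 0 :=
    HasDerivAt.real_of_complex (by simpa using hf')
  have hseg : segment ℝ 0 (0 + 1) ⊆ Set.Icc (0 : ℝ) 1 := by
    simp [segment_eq_Icc]
  simpa using hmax.localize.hasFDerivWithinAt_nonpos hderiv.hasFDerivAt.hasFDerivWithinAt
    (mem_posTangentConeAt_of_segment_subset hseg)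

theorem sum_re_mul_nonpos_of_norm_sum_mul_cexp_le_one {κ : Type*} [Fintype κ] (w : κ → ℂ)
    (l : κ → ℝ) (hw : ∑ k, w k = 1)
    (h₀ : ∀ s : ℂ, s.re = 0 → ‖∑ k, w k * cexp (s * l k)‖ ≤ 1)
    (h₁ : ∀ s : ℂ, s.re = 1 → ‖∑ k, w k * cexp (s * l k)‖ ≤ 1) :
    ∑ k, (w k).re * l k ≤ 0 := by
  set f : ℂ → ℂ := fun s => ∑ k, w k * cexp (s * l k)
  have hd : Differentiable ℂ f := by fun_prop
  have hB : BddAbove ((norm ∘ f) '' verticalClosedStrip 0 1) := by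
    refine ⟨∑ k, ‖w k‖ * Real.exp |l k|, ?_⟩
    rintro _ ⟨s, ⟨hs0, hs1⟩, rfl⟩
    refine (norm_sum_le _ _).trans (sum_le_sum fun k _ => ?_)
    rw [norm_mul, norm_exp, re_mul_ofReal]
    gcongr
    calc s.re * l k ≤ |s.re * l k| := le_abs_self _
      _ ≤ |l k| := by
        rw [abs_mul, abs_of_nonneg hs0]
        exact mul_le_of_le_one_left (abs_nonneg _) hs1
  have hf' : HasDerivAt f (∑ k, w k * l k) 0 := by
    refine HasDerivAt.fun_sum fun k _ => ?_
    simpa using ((hasDerivAt_mul_const (x := 0) (l k : ℂ)).cexp).const_mul (w k)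
  have := re_nonpos_of_hasDerivAt_of_norm_le_one_on_verticalStrip hd.diffContOnCl hB
    h₀ h₁ (by simp [f, hw]) hf'
  simpa [re_sum, mul_re] using this

theorem sum_sum_mul_add_eq {ι κ : Type*} [Fintype ι] [Fintype κ] (r : ι → κ → ℝ) (a : ι → ℝ)
    (b : κ → ℝ) :
    ∑ i, ∑ j, r i j * (a i + b j) = ∑ i, (∑ j, r i j) * a i + ∑ j, (∑ i, r i j) * b j := by
  simp only [mul_add, sum_add_distrib, sum_mul]
  rw [sum_comm (f := fun i j => r i j * b j)]

-- For `α = 0` the exponent is junk (`Real.log 0 = 0`), but then `hz` forces `z = 0`.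
theorem norm_mul_exp_log_sub_log_add_log_le {z : ℂ} {α β c : ℝ} (hα : 0 ≤ α) (hβ : 0 ≤ β)
    (hc : 0 < c) (hz : ‖z‖ ≤ c * α * β) :
    ‖z‖ * Real.exp (Real.log α - Real.log c + Real.log β) ≤ α ^ 2 * β ^ 2 := by
  rcases hα.eq_or_lt with rfl | hα
  · simp [norm_le_zero_iff.1 (by simpa using hz)]
  rcases hβ.eq_or_lt with rfl | hβ
  · simp [norm_le_zero_iff.1 (by simpa using hz)]
  rw [Real.exp_add, Real.exp_sub, Real.exp_log hα, Real.exp_log hβ, Real.exp_log hc]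
  calc ‖z‖ * (α / c * β) ≤ c * α * β * (α / c * β) := by gcongr
    _ = α ^ 2 * β ^ 2 := by field_simp

theorem sum_sq_mul_log_sq_add_le_two_log {ι κ : Type*} [Fintype ι] [Fintype κ] (z : ι → κ → ℂ)
    {α : ι → ℝ} {β : κ → ℝ} {c : ℝ} (hα : ∀ i, 0 ≤ α i) (hβ : ∀ j, 0 ≤ β j)
    (hrow : ∀ i, ∑ j, z i j = (α i ^ 2 : ℝ)) (hcol : ∀ j, ∑ i, z i j = (β j ^ 2 : ℝ))
    (hα₁ : ∑ i, α i ^ 2 = 1)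
    (hunit : ∀ (u : ι → ℂ) (v : κ → ℂ), (∀ i, ‖u i‖ = 1) → (∀ j, ‖v j‖ = 1) →
      ‖∑ i, ∑ j, u i * z i j * v j‖ ≤ 1)
    (hz : ∀ i j, ‖z i j‖ ≤ c * α i * β j) :
    ∑ i, α i ^ 2 * Real.log (α i ^ 2) + ∑ j, β j ^ 2 * Real.log (β j ^ 2) ≤ 2 * Real.log c := by
  have hz₁ : ∑ i, ∑ j, z i j = 1 := by
    simp only [hrow]
    exact_mod_cast hα₁
  have hβ₁ : ∑ j, β j ^ 2 = 1 := by
    have : ∑ j, ((β j ^ 2 : ℝ) : ℂ) = 1 := by simp only [← hcol]; rw [sum_comm, hz₁]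
    exact_mod_cast this
  have hc : 0 < c := by
    by_contra! hc
    have : ∀ i j, z i j = 0 := fun i j => norm_le_zero_iff.1 <| (hz i j).trans <|
      mul_nonpos_of_nonpos_of_nonneg (mul_nonpos_of_nonpos_of_nonneg hc (hα i)) (hβ j)
    simp [this] at hz₁
  set a : ι → ℝ := fun i => Real.log (α i) - Real.log c
  set b : κ → ℝ := fun j => Real.log (β j)
  have key := sum_re_mul_nonpos_of_norm_sum_mul_cexp_le_one (fun p : ι × κ => z p.1 p.2)
    (fun p => a p.1 + b p.2) (by rwa [Fintype.sum_prod_type])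
    (fun s hs => by
      convert hunit (fun i => cexp (s * a i)) (fun j => cexp (s * b j))
        (fun i => by rw [norm_exp, re_mul_ofReal, hs, zero_mul, Real.exp_zero])
        (fun j => by rw [norm_exp, re_mul_ofReal, hs, zero_mul, Real.exp_zero]) using 2
      rw [Fintype.sum_prod_type]
      refine sum_congr rfl fun i _ => sum_congr rfl fun j _ => ?_
      push_cast
      rw [mul_add, Complex.exp_add]
      ring)
    (fun s hs => calc
      _ ≤ ∑ p : ι × κ, ‖z p.1 p.2‖ * Real.exp (a p.1 + b p.2) := by
          refine (norm_sum_le _ _).trans (sum_le_sum fun p _ => ?_)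
          rw [norm_mul, norm_exp, re_mul_ofReal, hs, one_mul]
      _ ≤ ∑ p : ι × κ, α p.1 ^ 2 * β p.2 ^ 2 := sum_le_sum fun p _ =>
          norm_mul_exp_log_sub_log_add_log_le (hα p.1) (hβ p.2) hc (hz p.1 p.2)
      _ = 1 := by simp only [Fintype.sum_prod_type, ← sum_mul_sum, hα₁, hβ₁, one_mul])
  simp only [Fintype.sum_prod_type, sum_sum_mul_add_eq, ← re_sum, hrow, hcol, ofReal_re, a, b,
    mul_sub, sum_sub_distrib, ← sum_mul, hα₁, one_mul] at key
  have hlog (x : ℝ) : x ^ 2 * Real.log (x ^ 2) = 2 * (x ^ 2 * Real.log x) := by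
    rw [Real.log_pow]; push_cast; ring
  simp only [hlog, ← mul_sum]
  linarith

theorem norm_le_sSup_div_mul_norm_mul_norm {ι κ E F G : Type*} [Finite ι] [Finite κ]
    [NormedAddCommGroup E] [NormedAddCommGroup F] [NormedAddCommGroup G]
    (z : ι → κ → G) (x : ι → E) (y : κ → F) (hx : ∀ i j, x i = 0 → z i j = 0)
    (hy : ∀ i j, y j = 0 → z i j = 0) (i : ι) (j : κ) :
    ‖z i j‖ ≤ sSup {r : ℝ | ∃ i j, x i ≠ 0 ∧ y j ≠ 0 ∧ r = ‖z i j‖ / (‖x i‖ * ‖y j‖)} *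
      ‖x i‖ * ‖y j‖ := by
  by_cases hxi : x i = 0
  · simp [hx i j hxi, hxi]
  by_cases hyj : y j = 0
  · simp [hy i j hyj, hyj]
  have hbdd : BddAbove {r : ℝ | ∃ i j, x i ≠ 0 ∧ y j ≠ 0 ∧ r = ‖z i j‖ / (‖x i‖ * ‖y j‖)} := by
    refine (Set.finite_range fun p : ι × κ => ‖z p.1 p.2‖ / (‖x p.1‖ * ‖y p.2‖)).bddAbove.mono ?_
    rintro _ ⟨i, j, -, -, rfl⟩
    exact ⟨(i, j), rfl⟩
  have hle := le_csSup hbdd ⟨i, j, hxi, hyj, rfl⟩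
  rwa [div_le_iff₀ (by positivity), ← mul_assoc] at hle

open ContinuousLinearMap

theorem entropic_uncertainty_povm_general
    {H : Type*} [NormedAddCommGroup H] [InnerProductSpace ℂ H]
    {m n : ℕ} (X : Fin m → H →L[ℂ] H) (Y : Fin n → H →L[ℂ] H)
    (hXsum : ∑ i, X i = 1)
    (hYsum : ∑ j, Y j = 1)
    (SX : Fin m → H →L[ℂ] H) (hSX : ∀ i, (SX i).IsPositive ∧ SX i ∘L SX i = X i)
    (SY : Fin n → H →L[ℂ] H) (hSY : ∀ j, (SY j).IsPositive ∧ SY j ∘L SY j = Y j)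
    (ψ : H) (hψ : ‖ψ‖ = 1) :
    (-∑ i, (inner ℂ ψ (X i ψ) : ℂ).re * Real.logb 2 (inner ℂ ψ (X i ψ) : ℂ).re) +
      (-∑ j, (inner ℂ ψ (Y j ψ) : ℂ).re * Real.logb 2 (inner ℂ ψ (Y j ψ) : ℂ).re) ≥
    -2 * Real.logb 2 (sSup {r : ℝ | ∃ i j, SX i ψ ≠ 0 ∧ SY j ψ ≠ 0 ∧
      r = ‖(inner ℂ ψ ((X i ∘L Y j) ψ) : ℂ)‖ / (‖SX i ψ‖ * ‖SY j ψ‖)}) := by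
  have hSXsymm i := (hSX i).1.isSymmetric
  have hSYsymm j := (hSY j).1.isSymmetric
  have hX i : inner ℂ ψ (X i ψ) = ((‖SX i ψ‖ ^ 2 : ℝ) : ℂ) :=
    inner_self_apply_eq_norm_sqrt_sq (hSXsymm i) (hSX i).2 ψ
  have hY j : inner ℂ ψ (Y j ψ) = ((‖SY j ψ‖ ^ 2 : ℝ) : ℂ) :=
    inner_self_apply_eq_norm_sqrt_sq (hSYsymm j) (hSY j).2 ψ
  have hrow i := (sum_inner_comp_apply_of_sum_eq_one_right hYsum (X i) ψ ψ).trans (hX i)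
  have hcol j := (sum_inner_comp_apply_of_sum_eq_one_left hXsum (Y j) ψ ψ).trans (hY j)
  have hψX : ∑ i, ‖SX i ψ‖ ^ 2 = 1 := by
    rw [sum_norm_sqrt_apply_sq hSXsymm (fun i => (hSX i).2) hXsum, hψ, one_pow]
  have key := sum_sq_mul_log_sq_add_le_two_log (fun i j => inner ℂ ψ ((X i ∘L Y j) ψ))
    (fun i => norm_nonneg (SX i ψ)) (fun j => norm_nonneg (SY j ψ)) hrow hcol hψX
    (fun u v hu hv => by
      simpa [hψ] using norm_sum_sum_mul_inner_comp_apply_le hSXsymm (fun i => (hSX i).2) hXsum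
        hSYsymm (fun j => (hSY j).2) hYsum (fun i => (hu i).le) (fun j => (hv j).le) ψ)
    (norm_le_sSup_div_mul_norm_mul_norm _ _ _
      (fun i j => inner_comp_apply_eq_zero_of_sqrt_apply_eq_zero_left (hSXsymm i) (hSX i).2)
      (fun i j => inner_comp_apply_eq_zero_of_sqrt_apply_eq_zero_right (hSXsymm i) (hSX i).2
        (hSYsymm j) (hSY j).2))
  simp only [hX, hY, ofReal_re, Real.logb, ge_iff_le, mul_div_assoc', ← sum_div, ← neg_div,
    ← add_div]
  exact div_le_div_of_nonneg_right (by linarith) (Real.log_pos one_lt_two).le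

theorem entropic_uncertainty_povm
    {H : Type*} [NormedAddCommGroup H] [InnerProductSpace ℂ H] [FiniteDimensional ℂ H]
    {m n : ℕ} (X : Fin m → H →L[ℂ] H) (Y : Fin n → H →L[ℂ] H)
    (hX : ∀ i, (X i).IsPositive) (hXsum : ∑ i, X i = 1)
    (hY : ∀ j, (Y j).IsPositive) (hYsum : ∑ j, Y j = 1)
    (SX : Fin m → H →L[ℂ] H) (hSX : ∀ i, (SX i).IsPositive ∧ SX i ∘L SX i = X i)
    (SY : Fin n → H →L[ℂ] H) (hSY : ∀ j, (SY j).IsPositive ∧ SY j ∘L SY j = Y j)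
    (ψ : H) (hψ : ‖ψ‖ = 1) :
    (-∑ i, (inner ℂ ψ (X i ψ) : ℂ).re * Real.logb 2 (inner ℂ ψ (X i ψ) : ℂ).re) +
      (-∑ j, (inner ℂ ψ (Y j ψ) : ℂ).re * Real.logb 2 (inner ℂ ψ (Y j ψ) : ℂ).re) ≥
    -2 * Real.logb 2 (sSup {r : ℝ | ∃ i j, SX i ψ ≠ 0 ∧ SY j ψ ≠ 0 ∧
      r = ‖(inner ℂ ψ ((X i ∘L Y j) ψ) : ℂ)‖ / (‖SX i ψ‖ * ‖SY j ψ‖)}) :=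
  entropic_uncertainty_povm_general X Y hXsum hYsum SX hSX SY hSY ψ hψ
end

section
/- Let X = (X_1,...,X_m) be a POVM on a finite-dimensional complex Hilbert space and ρ a density operator. Then H(X,ρ) ≥ -log₂ max_{i,j} ‖X_i^{1/2} X_j^{1/2}‖, where H(X,ρ) = -Σ_i Tr(ρX_i) log₂ Tr(ρX_i). -/
/-!
In an eigenbasis `(e_k)` of `ρ` with eigenvalues `λ_k ≥ 0`, `Σ λ_k = 1`, the outcome
probabilities are `p_i = Re Tr(ρ X_i) = Σ_k λ_k Re ⟪e_k, X_i e_k⟫`. Hence `p_i ≥ 0`,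
`Σ p_i = Re Tr ρ = 1` and `p_i ≤ ‖X_i‖ = ‖X_i^{1/2} X_i^{1/2}‖ ≤ c`, where `c` is the maximum of
the overlaps. Then `Σ p_i log p_i ≤ Σ p_i log c = log c`.
-/

open RCLike Module
open scoped InnerProductSpace

namespace LinearMap

variable {𝕜 E : Type*} [RCLike 𝕜] [NormedAddCommGroup E] [InnerProductSpace 𝕜 E]
  [FiniteDimensional 𝕜 E]

lemma IsSymmetric.re_trace_comp_eq_sum {ρ : E →ₗ[𝕜] E} (hρ : ρ.IsSymmetric) {n : ℕ}
    (hn : finrank 𝕜 E = n) (T : E →ₗ[𝕜] E) :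
    re ((ρ ∘ₗ T).trace 𝕜 E) = ∑ k, hρ.eigenvalues hn k *
      re ⟪hρ.eigenvectorBasis hn k, T (hρ.eigenvectorBasis hn k)⟫_𝕜 := by
  rw [trace_comp_comm', trace_eq_sum_inner _ (hρ.eigenvectorBasis hn), map_sum]
  refine Fintype.sum_congr _ _ fun k => ?_
  rw [comp_apply, hρ.apply_eigenvectorBasis, map_smul, inner_smul_real_right, RCLike.smul_re]

end LinearMap

namespace ContinuousLinearMap

variable {𝕜 E : Type*} [RCLike 𝕜] [NormedAddCommGroup E] [InnerProductSpace 𝕜 E]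

lemma sum_trace_comp {ι : Type*} [Fintype ι] (ρ : E →L[𝕜] E) {X : ι → E →L[𝕜] E}
    (hX : ∑ i, X i = 1) :
    ∑ i, LinearMap.trace 𝕜 E (ρ ∘L X i : E →L[𝕜] E) = LinearMap.trace 𝕜 E ρ := by
  rw [← map_sum, ← toLinearMap_sum, ← comp_finsetSum, hX]
  rfl

variable [FiniteDimensional 𝕜 E] {ρ : E →L[𝕜] E}

lemma IsPositive.re_trace_comp_nonneg {T : E →L[𝕜] E} (hρ : ρ.IsPositive) (hT : T.IsPositive) :
    0 ≤ re (LinearMap.trace 𝕜 E (ρ ∘L T : E →L[𝕜] E)) := by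
  rw [toLinearMap_comp, hρ.toLinearMap.isSymmetric.re_trace_comp_eq_sum rfl]
  exact Finset.sum_nonneg fun k _ =>
    mul_nonneg (hρ.toLinearMap.nonneg_eigenvalues rfl k) (hT.re_inner_nonneg_right _)

lemma IsPositive.re_trace_comp_le (hρ : ρ.IsPositive) (T : E →L[𝕜] E) :
    re (LinearMap.trace 𝕜 E (ρ ∘L T : E →L[𝕜] E)) ≤ ‖T‖ * re (LinearMap.trace 𝕜 E ρ) := by
  set hρs := hρ.toLinearMap.isSymmetric
  set b := hρs.eigenvectorBasis rfl
  have hdiag (k) : re ⟪b k, T (b k)⟫_𝕜 ≤ ‖T‖ := calc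
    re ⟪b k, T (b k)⟫_𝕜 ≤ ‖b k‖ * ‖T (b k)‖ := (re_le_norm _).trans (norm_inner_le_norm _ _)
    _ ≤ ‖T‖ := by simpa [b.norm_eq_one] using T.le_opNorm (b k)
  rw [toLinearMap_comp, hρs.re_trace_comp_eq_sum rfl, hρs.re_trace_eq_sum_eigenvalues rfl,
    Finset.mul_sum]
  exact Finset.sum_le_sum fun k _ => by
    rw [mul_comm ‖T‖]
    exact mul_le_mul_of_nonneg_left (hdiag k) (hρ.toLinearMap.nonneg_eigenvalues rfl k)

end ContinuousLinearMap

lemma Real.neg_logb_le_neg_sum_mul_logb {ι : Type*} [Fintype ι] {b c : ℝ} (hb : 1 < b)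
    {p : ι → ℝ} (hp0 : ∀ i, 0 ≤ p i) (hp1 : ∑ i, p i = 1) (hpc : ∀ i, p i ≤ c) :
    -logb b c ≤ -∑ i, p i * logb b (p i) := by
  rw [neg_le_neg_iff]
  calc ∑ i, p i * logb b (p i) ≤ ∑ i, p i * logb b c := Finset.sum_le_sum fun i _ => by
        rcases (hp0 i).eq_or_lt with h | h
        · simp [← h]
        · exact mul_le_mul_of_nonneg_left (logb_le_logb_of_le hb h (hpc i)) h.le
    _ = logb b c := by rw [← Finset.sum_mul, hp1, one_mul]

theorem entropic_uncertainty_single_povm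
    {H : Type*} [NormedAddCommGroup H] [InnerProductSpace ℂ H] [FiniteDimensional ℂ H]
    {m : ℕ} (X : Fin m → H →L[ℂ] H)
    (hX : ∀ i, (X i).IsPositive) (hXsum : ∑ i, X i = 1)
    (SX : Fin m → H →L[ℂ] H) (hSX : ∀ i, (SX i).IsPositive ∧ SX i ∘L SX i = X i)
    (ρ : H →L[ℂ] H) (hρpos : ρ.IsPositive)
    (hρtr : LinearMap.trace ℂ H (ρ : H →ₗ[ℂ] H) = 1) :
    (-∑ i, (LinearMap.trace ℂ H ((ρ ∘L X i : H →L[ℂ] H) : H →ₗ[ℂ] H)).re *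
        Real.logb 2 (LinearMap.trace ℂ H ((ρ ∘L X i : H →L[ℂ] H) : H →ₗ[ℂ] H)).re) ≥
    -Real.logb 2 (sSup {r : ℝ | ∃ i j, r = ‖SX i ∘L SX j‖}) := by
  set c := sSup {r : ℝ | ∃ i j, r = ‖SX i ∘L SX j‖}
  have hXc (i) : ‖X i‖ ≤ c := by
    refine le_csSup ?_ ⟨i, i, by rw [(hSX i).2]⟩
    exact ((Set.finite_range fun q : Fin m × Fin m => ‖SX q.1 ∘L SX q.2‖).subset
      (by rintro _ ⟨i, j, rfl⟩; exact ⟨(i, j), rfl⟩)).bddAbove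
  refine Real.neg_logb_le_neg_sum_mul_logb one_lt_two
    (fun i => hρpos.re_trace_comp_nonneg (hX i)) ?_ fun i => ?_
  · simpa [hρtr] using congrArg Complex.re (ρ.sum_trace_comp hXsum)
  · calc _ ≤ ‖X i‖ * (LinearMap.trace ℂ H ρ).re := hρpos.re_trace_comp_le (X i)
      _ = ‖X i‖ := by simp [hρtr]
      _ ≤ c := hXc i
end
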